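/- arXiv:1508.04721 — 7 statements merged into one kernel-verified Lean document; each statement's English description precedes it below -/
import Mathlib

section
/- Every natural number can be expressed as the sum of forty-nine (possibly zero) decimal palindromes. -/
def IsPal (n : ℕ) : Prop := (Nat.digits 10 n).Palindrome

namespace PalAux

/-- repunit value -/
def R10 (j : ℕ) : ℕ := Nat.ofDigits 10 (List.replicate j 1)

lemma R10_succ (j : ℕ) : R10 (j + 1) = 1 + 10 * R10 j := by
  simp [R10, List.replicate_succ, Nat.ofDigits_cons]

lemma nine_R10 (j : ℕ) : 9 * R10 j + 1 = 10 ^ j := by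
  induction j with
  | zero => simp [R10]
  | succ j ih => rw [R10_succ, pow_succ]; omega

lemma rep_val (c j : ℕ) : Nat.ofDigits 10 (List.replicate j c) = c * R10 j := by
  induction j with
  | zero => simp [R10]
  | succ j ih => simp [List.replicate_succ, Nat.ofDigits_cons, ih, R10_succ]; ring

lemma isPal_zero : IsPal 0 := by
  simp [IsPal]; exact List.Palindrome.nil

lemma isPal_single (d : ℕ) (hd : d < 10) : IsPal d := by
  rcases Nat.eq_zero_or_pos d with h | h
  · subst h; exact isPal_zero
  · unfold IsPal
    rw [Nat.digits_def' (by norm_num : (1:ℕ) < 10) h, Nat.mod_eq_of_lt hd,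
      Nat.div_eq_of_lt hd]
    simpa using List.Palindrome.singleton _

lemma isPal_rep (c j : ℕ) (hc : c ≤ 9) : IsPal (Nat.ofDigits 10 (List.replicate j c)) := by
  rcases Nat.eq_zero_or_pos c with h | h
  · subst h; rw [rep_val]; simpa using isPal_zero
  rcases Nat.eq_zero_or_pos j with h' | h'
  · subst h'; simpa [R10, rep_val] using isPal_zero
  unfold IsPal
  rw [Nat.digits_ofDigits 10 (by norm_num) _ ?_ ?_]
  · exact List.Palindrome.of_reverse_eq List.reverse_replicate
  · intro x hx
    rw [List.eq_of_mem_replicate hx]; omega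
  · obtain ⟨j', rfl⟩ : ∃ j', j = j' + 1 := ⟨j - 1, by omega⟩
    rw [List.replicate_succ']
    intro hne
    rw [List.getLast_concat]
    omega

lemma R10_pos (j : ℕ) (hj : 0 < j) : 0 < R10 j := by
  have := nine_R10 j
  have h10 : 10 ^ 1 ≤ 10 ^ j := Nat.pow_le_pow_right (by norm_num) hj
  simp at h10; omega

/-- greedy repdigit step -/
lemma step (j x : ℕ) (h : x ≤ R10 (j + 1)) :
    ∃ p r, IsPal p ∧ x = p + r ∧ r ≤ R10 j := by
  rcases eq_or_lt_of_le h with rfl | hlt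
  · exact ⟨R10 (j + 1), 0, by simpa [R10] using isPal_rep 1 (j + 1) (by norm_num),
      by omega, by omega⟩
  have hx : x ≤ 10 * R10 j := by have := R10_succ j; omega
  rcases Nat.eq_zero_or_pos (R10 j) with hz | hpos
  · exact ⟨0, 0, isPal_zero, by omega, by omega⟩
  have hdm := Nat.div_add_mod x (R10 j)
  have hmlt : x % R10 j < R10 j := Nat.mod_lt _ hpos
  rcases le_or_gt (x / R10 j) 9 with h9 | h9
  · refine ⟨Nat.ofDigits 10 (List.replicate j (x / R10 j)), x % R10 j,
      isPal_rep _ j h9, ?_, by omega⟩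
    rw [rep_val]
    have hcm : x / R10 j * R10 j = R10 j * (x / R10 j) := mul_comm _ _
    omega
  · have h10 : 10 * R10 j ≤ x := by
      have h1 : 10 * R10 j ≤ (x / R10 j) * R10 j := Nat.mul_le_mul_right _ (by omega)
      have hcm : x / R10 j * R10 j = R10 j * (x / R10 j) := mul_comm _ _
      omega
    refine ⟨Nat.ofDigits 10 (List.replicate j 9), R10 j, isPal_rep 9 j (le_refl _), ?_, le_refl _⟩
    rw [rep_val]; omega

/-- every n < R10 (L+1) is the sum of at most L+1 repdigit palindromes -/
lemma small (L : ℕ) : ∀ n, n < R10 (L + 1) →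
    ∃ l : List ℕ, (∀ x ∈ l, IsPal x) ∧ l.length ≤ L + 1 ∧ l.sum = n := by
  induction L with
  | zero =>
    intro n hn
    have : R10 1 = 1 := by simp [R10, Nat.ofDigits]
    rw [this] at hn
    exact ⟨[], by simp, by simp, by simp; omega⟩
  | succ L ih =>
    intro n hn
    have hstep := R10_succ (L + 1)
    have hx : n ≤ 10 * R10 (L + 1) := by omega

    have hpos : 0 < R10 (L + 1) := R10_pos _ (by omega)
    have hdm := Nat.div_add_mod n (R10 (L + 1))
    have hmlt : n % R10 (L + 1) < R10 (L + 1) := Nat.mod_lt _ hpos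
    rcases le_or_gt (n / R10 (L + 1)) 9 with h9 | h9
    · obtain ⟨l, hl1, hl2, hl3⟩ := ih (n % R10 (L + 1)) hmlt
      refine ⟨Nat.ofDigits 10 (List.replicate (L + 1) (n / R10 (L + 1))) :: l, ?_, by simp; omega, ?_⟩
      · intro x hx
        rcases List.mem_cons.mp hx with rfl | hx
        · exact isPal_rep _ (L + 1) h9
        · exact hl1 x hx
      · have hcm : n / R10 (L + 1) * R10 (L + 1) = R10 (L + 1) * (n / R10 (L + 1)) := mul_comm _ _
        simp [hl3, rep_val]; omega
    · have h10 : 10 * R10 (L + 1) ≤ n := by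
        have h1 : 10 * R10 (L + 1) ≤ (n / R10 (L + 1)) * R10 (L + 1) := Nat.mul_le_mul_right _ (by omega)
        have hcm : n / R10 (L + 1) * R10 (L + 1) = R10 (L + 1) * (n / R10 (L + 1)) := mul_comm _ _
        omega
      have hxeq : n = 10 * R10 (L + 1) := le_antisymm hx h10
      refine ⟨[Nat.ofDigits 10 (List.replicate (L + 1) 9), Nat.ofDigits 10 (List.replicate (L + 1) 1)],
        ?_, by simp, ?_⟩
      · intro x hx
        rcases List.mem_cons.mp hx with rfl | hx
        · exact isPal_rep 9 (L + 1) (by norm_num)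
        · rcases List.mem_cons.mp hx with rfl | hx
          · exact isPal_rep 1 (L + 1) (by norm_num)
          · simp at hx
      · simp [rep_val]; omega

end PalAux
-- chunk B (appended after chunk A content for testing)
namespace PalAux

lemma getLast_ne_zero_of_concat (l t : List ℕ) (d : ℕ) (hl : l = t ++ [d]) (hd0 : d ≠ 0) :
    ∀ h : l ≠ [], l.getLast h ≠ 0 := by
  subst hl; intro h; rw [List.getLast_concat]; exact hd0

lemma comp_lemma (l : List ℕ) (h : ∀ x ∈ l, x < 10) :
    Nat.ofDigits 10 (l.map (fun x => 9 - x)) + Nat.ofDigits 10 l + 1 = 10 ^ l.length := by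
  induction l with
  | nil => simp
  | cons a t ih =>
    have ha : a < 10 := h a (by simp)
    have ih' := ih (fun x hx => h x (by simp [hx]))
    simp only [List.map_cons, Nat.ofDigits_cons, List.length_cons, pow_succ]
    omega

lemma isPal_even (t : List ℕ) (d : ℕ) (ht : ∀ x ∈ t, x < 10) (hd : d < 10) (hd0 : d ≠ 0) :
    IsPal (Nat.ofDigits 10 ((t ++ [d]).reverse ++ (t ++ [d]))) := by
  unfold IsPal
  have hmem : ∀ x ∈ (t ++ [d]).reverse ++ (t ++ [d]), x < 10 := by
    intro x hx
    rcases List.mem_append.mp hx with hx | hx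
    · rcases List.mem_append.mp (List.mem_reverse.mp hx) with hx | hx
      · exact ht x hx
      · simp at hx; omega
    · rcases List.mem_append.mp hx with hx | hx
      · exact ht x hx
      · simp at hx; omega
  rw [Nat.digits_ofDigits 10 (by norm_num) _ hmem ?_]
  · apply List.Palindrome.of_reverse_eq
    rw [List.reverse_append, List.reverse_reverse]
  · exact getLast_ne_zero_of_concat _ ((t ++ [d]).reverse ++ t) d (by simp) hd0

lemma isPal_odd (t : List ℕ) (d : ℕ) (ht : ∀ x ∈ t, x < 10) (hd : d < 10) (hd0 : d ≠ 0) :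
    IsPal (Nat.ofDigits 10 ((t ++ [d]).reverse ++ (t ++ [d]).tail)) := by
  unfold IsPal
  have hmem : ∀ x ∈ (t ++ [d]).reverse ++ (t ++ [d]).tail, x < 10 := by
    intro x hx
    rcases List.mem_append.mp hx with hx | hx
    · rcases List.mem_append.mp (List.mem_reverse.mp hx) with hx | hx
      · exact ht x hx
      · simp at hx; omega
    · have : x ∈ t ++ [d] := List.mem_of_mem_tail hx
      rcases List.mem_append.mp this with hx' | hx'
      · exact ht x hx'
      · simp at hx'; omega
  rw [Nat.digits_ofDigits 10 (by norm_num) _ hmem ?_]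
  · apply List.Palindrome.of_reverse_eq
    cases t with
    | nil => simp
    | cons a t' =>
      simp only [List.cons_append, List.tail_cons, List.reverse_cons, List.reverse_append]
      simp
  · cases t with
    | nil =>
      simp only [List.nil_append, List.tail_cons, List.append_nil]
      intro hne
      simpa using hd0
    | cons a t' =>
      simp only [List.cons_append, List.tail_cons]
      exact getLast_ne_zero_of_concat _ ((a :: (t' ++ [d])).reverse ++ t') d (by simp) hd0

lemma ofDigits_replicate_zero (z : ℕ) : Nat.ofDigits 10 (List.replicate z 0) = 0 := by
  rw [rep_val]; ring

lemma pad_exists (k v : ℕ) (hk : 0 < k) (hv : v < 10 ^ k) :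
    ∃ l : List ℕ, l.length = k ∧ (∀ x ∈ l, x < 10) ∧ Nat.ofDigits 10 l = v ∧
      Nat.ofDigits 10 l.tail = v / 10 ∧ l.head? = some (v % 10) := by
  rcases Nat.eq_zero_or_pos v with rfl | hvpos
  · refine ⟨List.replicate k 0, by simp, by intro x hx; simp at hx; omega, ?_, ?_, ?_⟩
    · exact ofDigits_replicate_zero k
    · rw [show (List.replicate k 0).tail = List.replicate (k - 1) 0 by
        obtain ⟨k', rfl⟩ : ∃ k', k = k' + 1 := ⟨k - 1, by omega⟩
        simp [List.replicate_succ]]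
      simp [ofDigits_replicate_zero]
    · obtain ⟨k', rfl⟩ : ∃ k', k = k' + 1 := ⟨k - 1, by omega⟩
      simp [List.replicate_succ]
  · have hlen : (Nat.digits 10 v).length ≤ k := by
      rcases Nat.lt_or_ge v 1 with h | h
      · omega
      have : Nat.log 10 v < k := Nat.log_lt_of_lt_pow (by omega) hv
      rw [Nat.digits_len 10 v (by norm_num) (by omega)]
      omega
    refine ⟨Nat.digits 10 v ++ List.replicate (k - (Nat.digits 10 v).length) 0,
      by simp; omega, ?_, ?_, ?_, ?_⟩
    · intro x hx
      rcases List.mem_append.mp hx with hx | hx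
      · exact Nat.digits_lt_base (by norm_num) hx
      · simp at hx; omega
    · rw [Nat.ofDigits_append, Nat.ofDigits_digits, ofDigits_replicate_zero]; ring
    · rw [Nat.digits_def' (by norm_num : (1:ℕ) < 10) hvpos]
      simp only [List.cons_append, List.tail_cons]
      rw [Nat.ofDigits_append, Nat.ofDigits_digits, ofDigits_replicate_zero]; ring
    · rw [Nat.digits_def' (by norm_num : (1:ℕ) < 10) hvpos]
      simp

end PalAux
namespace PalAux

lemma qlow (k v : ℕ) (hk : 2 ≤ k) (hv : v < 10 ^ k) (hv5 : v % 10 = 5) :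
    ∃ q W, IsPal q ∧ q = v + 10 ^ k * W ∧ W < 10 ^ (k - 1) := by
  obtain ⟨l, hlen, hlt, hval, htail, hhead⟩ := pad_exists k v (by omega) hv
  obtain ⟨l'', rfl⟩ : ∃ l'', l = (5 : ℕ) :: l'' := by
    cases l with
    | nil => simp at hhead
    | cons a t =>
      refine ⟨t, ?_⟩
      simp only [List.head?_cons, hv5] at hhead
      rw [(Option.some_inj.mp hhead)]
  have hrev : (l''.reverse ++ [5]).reverse = (5 : ℕ) :: l'' := by simp
  have hmem'' : ∀ x ∈ l''.reverse, x < 10 := by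
    intro x hx; exact hlt x (by simp at hx ⊢; exact Or.inr hx)
  refine ⟨Nat.ofDigits 10 ((l''.reverse ++ [5]).reverse ++ (l''.reverse ++ [5]).tail),
    Nat.ofDigits 10 (l''.reverse ++ [5]).tail, ?_, ?_, ?_⟩
  · exact isPal_odd l''.reverse 5 hmem'' (by norm_num) (by norm_num)
  · rw [Nat.ofDigits_append, hrev, hval]
    congr 2
    simp at hlen ⊢
    omega
  · have hlt' : ∀ x ∈ (l''.reverse ++ [5]).tail, x < 10 := by
      intro x hx
      have hx' := List.mem_of_mem_tail hx
      rcases List.mem_append.mp hx' with h | h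
      · exact hmem'' x h
      · simp at h; omega
    have := Nat.ofDigits_lt_base_pow_length (b := 10) (by norm_num) hlt'
    have hlen' : (l''.reverse ++ [5]).tail.length = k - 1 := by
      simp at hlen ⊢; omega
    rwa [hlen'] at this

lemma core (k m : ℕ) (hk : 3 ≤ k) (hm1 : 4 * 10 ^ (k - 1) ≤ m) (hm2 : m ≤ 7 * 10 ^ (k - 1)) :
    ∃ pe po, IsPal pe ∧ IsPal po ∧ pe + po = 10 ^ k * m := by
  obtain ⟨k', rfl⟩ : ∃ k', k = k' + 2 := ⟨k - 2, by omega⟩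
  set Y := 10 ^ k' with hY
  have hY10 : 10 ≤ Y := by
    calc (10:ℕ) = 10 ^ 1 := (pow_one 10).symm
    _ ≤ 10 ^ k' := Nat.pow_le_pow_right (by norm_num) (by omega)
  have hX : (10:ℕ) ^ (k' + 1) = 10 * Y := by rw [pow_succ]; ring
  have hZ : (10:ℕ) ^ (k' + 2) = 100 * Y := by rw [pow_succ, pow_succ]; ring
  rw [show k' + 2 - 1 = k' + 1 from rfl, hX] at hm1 hm2
  -- D, f, e, B
  set D := 110 * Y - m with hD
  have hmD : m + D = 110 * Y := by omega
  have hD1 : 40 * Y ≤ D := by omega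
  have hD2 : D ≤ 70 * Y := by omega
  have hfe := Nat.div_add_mod D 9
  have he : D % 9 ≤ 8 := by omega
  set f := D / 9 with hf
  set e := D % 9 with he'
  set B := 10 * f + e with hB
  have hB1 : 10 * Y ≤ B := by omega
  have hB2 : B < 80 * Y := by omega
  have hYpos : 0 < 10 * Y := by omega
  have hbt := Nat.div_add_mod B (10 * Y)
  set bt := B / (10 * Y) with hbtdef
  set Bl := B % (10 * Y) with hBldef
  have hBl : Bl < 10 * Y := Nat.mod_lt _ hYpos
  have hbt1 : 1 ≤ bt := by
    rcases Nat.eq_zero_or_pos bt with h0 | h; · rw [h0] at hbt; simp at hbt; omega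
    · exact h
  have hbt7 : bt ≤ 7 := by
    have := (Nat.div_lt_iff_lt_mul hYpos).mpr (show B < 8 * (10 * Y) by omega)
    omega
  -- pad Bl
  obtain ⟨pb, hplen, hplt, hpval, hptail, -⟩ :=
    pad_exists (k' + 1) Bl (by omega) (by rw [hX]; omega)
  set q := Bl / 10 with hqdef
  have hq := Nat.div_add_mod Bl 10
  have hrB : Bl % 10 ≤ 9 := by omega
  set u := 10 - bt with hu'
  have hu : u + bt = 10 := by omega
  -- lists
  set alist := pb.map (fun x => 9 - x) ++ [u] with hal
  set blist := pb ++ [bt] with hbl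
  have hallen : alist.length = k' + 2 := by simp [hal, hplen]
  have hbllen : blist.length = k' + 2 := by simp [hbl, hplen]
  refine ⟨Nat.ofDigits 10 (alist.reverse ++ alist), Nat.ofDigits 10 (blist.reverse ++ blist.tail),
    ?_, ?_, ?_⟩
  · exact isPal_even _ u (by intro x hx; simp [hal] at hx; obtain ⟨y, -, rfl⟩ := hx; omega)
      (by omega) (by omega)
  · exact isPal_odd pb bt hplt (by omega) (by omega)
  -- values
  have hcomp1 := comp_lemma pb hplt
  rw [hpval, hplen, hX] at hcomp1
  have hmemrev : ∀ x ∈ pb.reverse, x < 10 := fun x hx => hplt x (List.mem_reverse.mp hx)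
  have hcomp2 := comp_lemma pb.reverse hmemrev
  rw [List.length_reverse, hplen, hX] at hcomp2
  set VA := Nat.ofDigits 10 (pb.map (fun x => 9 - x)) with hVA
  set RBl := Nat.ofDigits 10 pb.reverse with hRBl
  set CR := Nat.ofDigits 10 (pb.reverse.map (fun x => 9 - x)) with hCR
  set P := Y * bt with hP
  -- OA
  have hOA : Nat.ofDigits 10 alist + 10 * P = VA + 100 * Y := by
    rw [hal, Nat.ofDigits_append, List.length_map, hplen, hX]
    have h1 : Nat.ofDigits 10 [u] = u := by simp [Nat.ofDigits]
    rw [h1]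
    have : 10 * Y * u + 10 * (Y * bt) = 100 * Y := by
      calc 10 * Y * u + 10 * (Y * bt) = 10 * Y * (u + bt) := by ring
      _ = 100 * Y := by rw [hu]; ring
    omega
  -- RA
  have hra' : alist.reverse = u :: (pb.reverse.map (fun x => 9 - x)) := by
    rw [hal]; simp
  have hRA : Nat.ofDigits 10 alist.reverse = u + 10 * CR := by
    rw [hra', Nat.ofDigits_cons]
  -- RB
  have hrb' : blist.reverse = bt :: pb.reverse := by rw [hbl]; simp
  have hRB : Nat.ofDigits 10 blist.reverse = bt + 10 * RBl := by
    rw [hrb', Nat.ofDigits_cons]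
  -- TB
  have hTB : Nat.ofDigits 10 blist.tail = q + P := by
    obtain ⟨p0, pt, rfl⟩ : ∃ p0 pt, pb = p0 :: pt := by
      cases pb with
      | nil => simp at hplen
      | cons a t => exact ⟨a, t, rfl⟩
    have htl : blist.tail = pt ++ [bt] := by rw [hbl]; simp
    rw [htl, Nat.ofDigits_append]
    have hptlen : pt.length = k' := by simp at hplen; omega
    have h1 : Nat.ofDigits 10 [bt] = bt := by simp [Nat.ofDigits]
    rw [h1, hptlen]
    have h2 : Nat.ofDigits 10 pt = q := by
      simp only [List.tail_cons] at hptail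
      rw [hptail]
    rw [h2, hP, hY]
  -- B decomposition
  have hBdec : B = 10 * P + Bl := by
    have : 10 * Y * bt = 10 * P := by rw [hP]; ring
    omega
  -- key identity
  have hkey : 1 + Nat.ofDigits 10 alist + Nat.ofDigits 10 blist.tail = m := by
    rw [hTB]
    omega
  -- final
  have hpe : Nat.ofDigits 10 (alist.reverse ++ alist)
      = u + 10 * CR + 100 * Y * Nat.ofDigits 10 alist := by
    rw [Nat.ofDigits_append, List.length_reverse, hallen, hZ, hRA]
  have hpo : Nat.ofDigits 10 (blist.reverse ++ blist.tail)
      = bt + 10 * RBl + 100 * Y * Nat.ofDigits 10 blist.tail := by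
    rw [Nat.ofDigits_append, List.length_reverse, hbllen, hZ, hRB]
  rw [hpe, hpo, hZ]
  calc u + 10 * CR + 100 * Y * Nat.ofDigits 10 alist +
      (bt + 10 * RBl + 100 * Y * Nat.ofDigits 10 blist.tail)
      = (u + bt + 10 * (CR + RBl)) +
        100 * Y * (Nat.ofDigits 10 alist + Nat.ofDigits 10 blist.tail) := by ring
    _ = 100 * Y + 100 * Y * (Nat.ofDigits 10 alist + Nat.ofDigits 10 blist.tail) := by omega
    _ = 100 * Y * (1 + Nat.ofDigits 10 alist + Nat.ofDigits 10 blist.tail) := by ring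
    _ = 100 * Y * m := by rw [hkey]

end PalAux
namespace PalAux

lemma pow10_le {a b : ℕ} (h : a ≤ b) : (10:ℕ) ^ a ≤ 10 ^ b :=
  Nat.pow_le_pow_right (by norm_num) h

lemma main_large (n : ℕ) (h : R10 49 ≤ n) :
    ∃ l : List ℕ, (∀ x ∈ l, IsPal x) ∧ l.length ≤ 49 ∧ l.sum = n := by
  have h49 := nine_R10 49
  have hpow49 : (10:ℕ) ^ 49 = 100 * 10 ^ 47 := by norm_num
  have hn47 : 10 ^ 47 ≤ n := by omega
  have hpos47 : (0:ℕ) < 10 ^ 47 := Nat.pow_pos (by norm_num)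
  have hn0 : n ≠ 0 := by omega
  have hg1 : 10 ^ Nat.log 10 n ≤ n := Nat.pow_log_le_self 10 hn0
  have hg2 : n < 10 ^ (Nat.log 10 n + 1) := Nat.lt_pow_succ_log_self (by norm_num) n
  have hg47 : 47 ≤ Nat.log 10 n := by
    by_contra hcon
    push_neg at hcon
    have : (10:ℕ) ^ (Nat.log 10 n + 1) ≤ 10 ^ 47 := pow10_le (by omega)
    omega
  obtain ⟨j, hj2, hjl, hju⟩ : ∃ j, 2 ≤ j ∧ 5 * 10 ^ (2*j+1) ≤ n ∧ n < 5 * 10 ^ (2*j+3) := by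
    rcases Nat.even_or_odd (Nat.log 10 n) with ⟨t, hgt⟩ | ⟨t, hgt⟩
    · have ht : 24 ≤ t := by omega
      rw [hgt] at hg1 hg2
      obtain ⟨s, rfl⟩ : ∃ s, t = s + 1 := ⟨t - 1, by omega⟩
      refine ⟨s, by omega, ?_, ?_⟩
      · have h1 : (10:ℕ) ^ (s+1+(s+1)) = 10 ^ (2*s+1) * 10 := by
          rw [show s+1+(s+1) = (2*s+1)+1 from by omega, pow_succ]
        omega
      · have h1 : (10:ℕ) ^ (s+1+(s+1)+1) = 10 ^ (2*s+3) := by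
          rw [show s+1+(s+1)+1 = 2*s+3 from by omega]
        have h2 : (0:ℕ) < 10 ^ (2*s+3) := Nat.pow_pos (by norm_num)
        omega
    · have ht : 23 ≤ t := by omega
      rw [hgt] at hg1 hg2
      rcases le_or_gt (5 * 10 ^ (2*t+1)) n with hc | hc
      · refine ⟨t, by omega, hc, ?_⟩
        calc n < 10 ^ (2*t+1+1) := hg2
        _ ≤ 10 ^ (2*t+3) := pow10_le (by omega)
        _ ≤ 5 * 10 ^ (2*t+3) := Nat.le_mul_of_pos_left _ (by norm_num)
      · obtain ⟨s, rfl⟩ : ∃ s, t = s + 1 := ⟨t - 1, by omega⟩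
        refine ⟨s, by omega, ?_, ?_⟩
        · calc 5 * 10 ^ (2*s+1) ≤ 10 * 10 ^ (2*s+1) := by omega
          _ = 10 ^ (2*s+2) := by rw [pow_succ]; ring
          _ ≤ 10 ^ (2*(s+1)+1) := pow10_le (by omega)
          _ ≤ n := hg1
        · have h1 : (10:ℕ) ^ (2*(s+1)+1) = 10 ^ (2*s+3) := by
            rw [show 2*(s+1)+1 = 2*s+3 from by omega]
          omega
  -- greedy phase
  have hT10 : (10:ℕ) ≤ 10 ^ (2*j+1) := by
    calc (10:ℕ) = 10 ^ 1 := (pow_one 10).symm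
    _ ≤ 10 ^ (2*j+1) := pow10_le (by omega)
  have hR5 := nine_R10 (2*j+5)
  have hE5 : (10:ℕ) ^ (2*j+5) = 100 * 10 ^ (2*j+3) := by
    rw [show 2*j+5 = (2*j+3)+1+1 from by omega, pow_succ, pow_succ]; ring
  have hxle : n - 5 * 10 ^ (2*j+1) ≤ R10 (2*j+5) := by omega
  obtain ⟨p1, r1, hp1, hx1, hr1⟩ := step (2*j+4) _ hxle
  obtain ⟨p2, r2, hp2, hx2, hr2⟩ := step (2*j+3) _ hr1
  obtain ⟨p3, x3, hp3, hx3, hr3⟩ := step (2*j+2) _ hr2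
  have hR2 := nine_R10 (2*j+2)
  have hE2 : (10:ℕ) ^ (2*j+2) = 10 * 10 ^ (2*j+1) := by rw [pow_succ]; ring
  have hx3b : x3 ≤ 2 * 10 ^ (2*j+1) := by omega
  -- n'' and d
  have hn''l : 5 * 10 ^ (2*j+1) ≤ 5 * 10 ^ (2*j+1) + x3 := by omega
  have hn''u : 5 * 10 ^ (2*j+1) + x3 ≤ 7 * 10 ^ (2*j+1) := by omega
  set n'' := 5 * 10 ^ (2*j+1) + x3 with hn''
  set d := (n'' + 5) % 10 with hd
  have hd10 : d < 10 := by omega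
  set n1 := n'' - d with hn1
  have hn1mod : n1 % 10 = 5 := by omega
  have hn1l : 5 * 10 ^ (2*j+1) - 9 ≤ n1 := by omega
  have hn1u : n1 ≤ 7 * 10 ^ (2*j+1) := by omega
  -- K, v
  have hKpos : (0:ℕ) < 10 ^ (j+1) := Nat.pow_pos (by norm_num)
  have hK10 : (10:ℕ) ≤ 10 ^ (j+1) := by
    calc (10:ℕ) = 10 ^ 1 := (pow_one 10).symm
    _ ≤ 10 ^ (j+1) := pow10_le (by omega)
  have hKT : (10:ℕ) ^ (j+1) * 10 ^ j = 10 ^ (2*j+1) := by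
    rw [← pow_add]; congr 1; omega
  have hdvd : (10:ℕ) ∣ 10 ^ (j+1) := dvd_pow_self 10 (Nat.succ_ne_zero j)
  have hv : n1 % 10 ^ (j+1) < 10 ^ (j+1) := Nat.mod_lt _ hKpos
  have hv5 : n1 % 10 ^ (j+1) % 10 = 5 := by
    rw [Nat.mod_mod_of_dvd n1 hdvd]; exact hn1mod
  obtain ⟨qL, W, hqpal, hqeq, hW⟩ := qlow (j+1) (n1 % 10 ^ (j+1)) (by omega) hv (by
    simpa using hv5)
  rw [show j + 1 - 1 = j from rfl] at hW
  have hdm := Nat.div_add_mod n1 (10 ^ (j+1))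
  -- bounds on nK := n1 / K
  have hKW : 10 ^ (j+1) * (W + 1) ≤ 10 ^ (2*j+1) := by
    calc 10 ^ (j+1) * (W + 1) ≤ 10 ^ (j+1) * 10 ^ j := Nat.mul_le_mul_left _ (by omega)
    _ = 10 ^ (2*j+1) := hKT
  have hKWexp : (10:ℕ) ^ (j+1) * (W + 1) = 10 ^ (j+1) * W + 10 ^ (j+1) := by ring
  have hql : qL ≤ n1 := by omega
  have hnKl : 5 * 10 ^ j ≤ n1 / 10 ^ (j+1) + 1 := by
    by_contra hcon
    push_neg at hcon
    have h1 : n1 / 10 ^ (j+1) + 2 ≤ 5 * 10 ^ j := by omega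
    have h2 : 10 ^ (j+1) * (n1 / 10 ^ (j+1) + 2) ≤ 10 ^ (j+1) * (5 * 10 ^ j) :=
      Nat.mul_le_mul_left _ h1
    have h3 : (10:ℕ) ^ (j+1) * (5 * 10 ^ j) = 5 * 10 ^ (2*j+1) := by
      rw [show (10:ℕ) ^ (j+1) * (5 * 10 ^ j) = 5 * (10 ^ (j+1) * 10 ^ j) from by ring, hKT]
    have h4 : (10:ℕ) ^ (j+1) * (n1 / 10 ^ (j+1) + 2) =
        10 ^ (j+1) * (n1 / 10 ^ (j+1)) + 2 * 10 ^ (j+1) := by ring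
    omega
  have hnKu : n1 / 10 ^ (j+1) ≤ 7 * 10 ^ j := by
    have h2 : 10 ^ (j+1) * (n1 / 10 ^ (j+1)) ≤ 10 ^ (j+1) * (7 * 10 ^ j) := by
      have h3 : (10:ℕ) ^ (j+1) * (7 * 10 ^ j) = 7 * 10 ^ (2*j+1) := by
        rw [show (10:ℕ) ^ (j+1) * (7 * 10 ^ j) = 7 * (10 ^ (j+1) * 10 ^ j) from by ring, hKT]
      omega
    exact Nat.le_of_mul_le_mul_left h2 hKpos
  have hWnK : W ≤ n1 / 10 ^ (j+1) := by
    have : (1:ℕ) ≤ 10 ^ j := Nat.one_le_pow _ _ (by norm_num)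
    omega
  -- m
  set m := n1 / 10 ^ (j+1) - W with hm
  have hmW : m + W = n1 / 10 ^ (j+1) := by omega
  have hmdist : 10 ^ (j+1) * m + 10 ^ (j+1) * W = 10 ^ (j+1) * (n1 / 10 ^ (j+1)) := by
    rw [← Nat.left_distrib, hmW]
  have hm1 : 4 * 10 ^ j ≤ m := by
    have : (1:ℕ) ≤ 10 ^ j := Nat.one_le_pow _ _ (by norm_num)
    omega
  have hm2 : m ≤ 7 * 10 ^ j := by omega
  obtain ⟨pe, po, hpe, hpo, hcore⟩ := core (j+1) m (by omega) (by
    rw [show j + 1 - 1 = j from rfl]; exact hm1) (by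
    rw [show j + 1 - 1 = j from rfl]; exact hm2)
  refine ⟨[p1, p2, p3, d, qL, pe, po], ?_, by simp, ?_⟩
  · intro x hx
    simp only [List.mem_cons, List.not_mem_nil, or_false] at hx
    rcases hx with rfl | rfl | rfl | rfl | rfl | rfl | rfl
    · exact hp1
    · exact hp2
    · exact hp3
    · exact isPal_single d hd10
    · exact hqpal
    · exact hpe
    · exact hpo
  · simp only [List.sum_cons, List.sum_nil, add_zero]
    omega

end PalAux
namespace PalAux

lemma sum_getD : ∀ (l : List ℕ) (N : ℕ), l.length = N →
    ∑ i : Fin N, l.getD i 0 = l.sum := by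
  intro l
  induction l with
  | nil => intro N h; simp [← h]
  | cons x t ih =>
    intro N h
    subst h
    rw [show (x :: t).length = t.length + 1 from rfl, Fin.sum_univ_succ]
    simp only [Fin.val_zero, List.getD_cons_zero, List.sum_cons]
    congr 1
    rw [← ih t.length rfl]
    apply Finset.sum_congr rfl
    intro i _
    simp [List.getD_cons_succ]

lemma list_to_fin (n : ℕ) (l : List ℕ) (h1 : ∀ x ∈ l, IsPal x) (h2 : l.length ≤ 49)
    (h3 : l.sum = n) :
    ∃ p : Fin 49 → ℕ, (∀ i, IsPal (p i)) ∧ n = ∑ i, p i := by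
  set l' := l ++ List.replicate (49 - l.length) 0 with hl'
  have hlen : l'.length = 49 := by simp [hl']; omega
  have hmem : ∀ x ∈ l', IsPal x := by
    intro x hx
    rcases List.mem_append.mp hx with hx | hx
    · exact h1 x hx
    · rw [List.eq_of_mem_replicate hx]; exact isPal_zero
  refine ⟨fun i => l'.getD i 0, ?_, ?_⟩
  · intro i
    show IsPal (l'.getD i 0)
    rcases lt_or_ge (i : ℕ) l'.length with h | h
    · rw [List.getD_eq_getElem l' 0 h]
      exact hmem _ (List.getElem_mem h)
    · rw [List.getD_eq_default l' 0 h]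
      exact isPal_zero
  · rw [sum_getD l' 49 hlen]
    simp [hl', h3]

end PalAux

theorem every_nat_sum_of_49_palindromes (n : ℕ) :
    ∃ p : Fin 49 → ℕ, (∀ i, IsPal (p i)) ∧ n = ∑ i, p i := by
  rcases lt_or_ge n (PalAux.R10 49) with h | h
  · obtain ⟨l, h1, h2, h3⟩ := PalAux.small 48 n h
    exact PalAux.list_to_fin n l h1 (by omega) h3
  · obtain ⟨l, h1, h2, h3⟩ := PalAux.main_large n h
    exact PalAux.list_to_fin n l h1 h2 h3
end

section
/- The set of decimal palindromes is an additive basis for the natural numbers; that is, there exists a constant k such that every natural number is the sum of at most k decimal palindromes. -/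
namespace PalAux

/-- digit lists: palindromic with digits < 10 -/
def Good (l : List ℕ) : Prop := l.Palindrome ∧ ∀ d ∈ l, d < 10

lemma good_nil : Good [] := ⟨List.Palindrome.nil, by simp⟩

lemma good_single {c : ℕ} (hc : c < 10) : Good [c] :=
  ⟨List.Palindrome.singleton c, by simpa⟩

lemma good_pair {c : ℕ} (hc : c < 10) : Good [c, c] := by
  refine ⟨?_, by simp [hc]⟩
  have := List.Palindrome.cons_concat c (List.Palindrome.nil (α := ℕ))
  simpa using this

lemma good_sandwich {l : List ℕ} {c : ℕ} (hc : c < 10) (h : Good l) :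
    Good (c :: (l ++ [c])) := by
  refine ⟨List.Palindrome.cons_concat c h.1, ?_⟩
  intro d hd
  rcases List.mem_cons.mp hd with rfl | hd
  · exact hc
  rcases List.mem_append.mp hd with hd | hd
  · exact h.2 d hd
  · cases List.mem_singleton.mp hd; exact hc

lemma ofDigits_sandwich (c : ℕ) (l : List ℕ) :
    Nat.ofDigits 10 (c :: (l ++ [c])) =
      c * (10 ^ (l.length + 1) + 1) + 10 * Nat.ofDigits 10 l := by
  rw [Nat.ofDigits_cons, Nat.ofDigits_append]
  simp [Nat.ofDigits_cons, Nat.ofDigits_nil]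
  ring

lemma length_sandwich (c : ℕ) (l : List ℕ) : (c :: (l ++ [c])).length = l.length + 2 := by
  simp

/-- greedy digit picking -/
lemma pick (B m T : ℕ) (hB : 0 < B) (hT : 9 ≤ T) (hlow : T ≤ m + 9)
    (hin : m < T + 10 * B) :
    ∃ c m', c ≤ 9 ∧ m = B * c + c + m' ∧ T ≤ m' + 9 ∧ m' < T + B := by
  by_cases h : m < T
  · exact ⟨0, m, by omega, by ring_nf, by omega, by omega⟩
  · push_neg at h
    have hd : B * ((m - T) / B) + (m - T) % B = m - T := Nat.div_add_mod _ _
    have hmod : (m - T) % B < B := Nat.mod_lt _ hB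
    have h2 : B * ((m - T) / B) < B * 10 := by omega
    have hc9 : (m - T) / B < 10 := Nat.lt_of_mul_lt_mul_left h2
    obtain ⟨q, hq⟩ : ∃ q, (m - T) / B = q := ⟨_, rfl⟩
    obtain ⟨g, hg⟩ : ∃ g, B * q = g := ⟨_, rfl⟩
    rw [hq] at hc9
    rw [hq, hg] at hd
    refine ⟨q, m - (g + q), by omega, ?_, by omega, by omega⟩
    rw [hg]
    omega


/-- seven symmetric digit strings of prescribed lengths summing to n -/
def Rows (L n : ℕ) : Prop :=
  ∃ A B C D E F G : List ℕ,
    Good A ∧ Good B ∧ Good C ∧ Good D ∧ Good E ∧ Good F ∧ Good G ∧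
    A.length = L ∧ B.length = L - 1 ∧ C.length = L - 1 ∧ D.length = L - 2 ∧
    E.length = L - 2 ∧ F.length = L - 3 ∧ G.length = L - 3 ∧
    Nat.ofDigits 10 A + Nat.ofDigits 10 B + Nat.ofDigits 10 C + Nat.ofDigits 10 D +
      Nat.ofDigits 10 E + Nat.ofDigits 10 F + Nat.ofDigits 10 G = n

lemma good_aba {a b : ℕ} (ha : a < 10) (hb : b < 10) : Good [a, b, a] := by
  have h := good_sandwich ha (good_single hb)
  simpa using h

lemma good_abba {a b : ℕ} (ha : a < 10) (hb : b < 10) : Good [a, b, b, a] := by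
  have h := good_sandwich ha (good_pair hb)
  simpa using h

lemma ofDigits_one (a : ℕ) : Nat.ofDigits 10 [a] = a := by
  simp [Nat.ofDigits]

lemma ofDigits_two (a : ℕ) : Nat.ofDigits 10 [a, a] = 11 * a := by
  simp [Nat.ofDigits]; ring

lemma ofDigits_aba (a b : ℕ) : Nat.ofDigits 10 [a, b, a] = 101 * a + 10 * b := by
  simp [Nat.ofDigits]; ring

lemma ofDigits_abba (a b : ℕ) : Nat.ofDigits 10 [a, b, b, a] = 1001 * a + 110 * b := by
  simp [Nat.ofDigits]; ring

lemma rows_three (n : ℕ) (h1 : 10 ≤ n) (h2 : n < 1000) : Rows 3 n := by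
  obtain ⟨a, ha9, v, hav⟩ : ∃ a, a ≤ 9 ∧ ∃ v, 101 * a + v = n ∧ v ≤ 198 := by
    refine ⟨(n - 98) / 101, by omega, n - 101 * ((n - 98) / 101), by omega⟩
  obtain ⟨hv, hv198⟩ := hav
  obtain ⟨c, c', d, d', hc, hc', hd, hd', hsum⟩ :
      ∃ c c' d d', c ≤ 9 ∧ c' ≤ 9 ∧ d ≤ 9 ∧ d' ≤ 9 ∧ 11 * c + 11 * c' + d + d' = v := by
    refine ⟨min (v / 11) 9, v / 11 - min (v / 11) 9, min (v % 11) 9,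
      v % 11 - min (v % 11) 9, by omega, by omega, by omega, by omega, by omega⟩
  refine ⟨[a, 0, a], [c, c], [c', c'], [d], [d'], [], [],
    good_aba (by omega) (by omega), good_pair (by omega), good_pair (by omega),
    good_single (by omega), good_single (by omega), good_nil, good_nil,
    rfl, rfl, rfl, rfl, rfl, rfl, rfl, ?_⟩
  rw [ofDigits_aba, ofDigits_two, ofDigits_two, ofDigits_one, ofDigits_one]
  simp [Nat.ofDigits]
  omega

lemma rows_four (n : ℕ) (h1 : 100 ≤ n) (h2 : n < 10000) : Rows 4 n := by
  obtain ⟨a, ha9, v, hv, hv19⟩ :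
      ∃ a, a ≤ 9 ∧ ∃ v, 1001 * a + v = n ∧ v ≤ 1996 := by
    refine ⟨(n - 996) / 1001, by omega, n - 1001 * ((n - 996) / 1001), by omega, by omega⟩
  obtain ⟨C, hC, W, hW, hW2⟩ : ∃ C, C ≤ 18 ∧ ∃ W, 101 * C + W = v ∧ W ≤ 200 := by
    refine ⟨(v - 100) / 101, by omega, v - 101 * ((v - 100) / 101), by omega, by omega⟩
  obtain ⟨E, hE, W2, hW2e, hW2b⟩ : ∃ E, E ≤ 18 ∧ ∃ W2, 10 * E + W2 = W ∧ W2 ≤ 30 := by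
    refine ⟨(W - 21) / 10, by omega, W - 10 * ((W - 21) / 10), by omega, by omega⟩
  obtain ⟨F, G, hF, hG, hFG⟩ : ∃ F G, F ≤ 9 ∧ G ≤ 18 ∧ 11 * F + G = W2 := by
    refine ⟨W2 / 11, W2 % 11, by omega, by omega, by omega⟩
  -- split C = c + c', E = e + e', G = g + g'
  obtain ⟨c, c', hc, hc', hcc⟩ : ∃ c c', c ≤ 9 ∧ c' ≤ 9 ∧ c + c' = C :=
    ⟨min C 9, C - min C 9, by omega, by omega, by omega⟩
  obtain ⟨e, e', he, he', hee⟩ : ∃ e e', e ≤ 9 ∧ e' ≤ 9 ∧ e + e' = E :=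
    ⟨min E 9, E - min E 9, by omega, by omega, by omega⟩
  obtain ⟨g, g', hg, hg', hgg⟩ : ∃ g g', g ≤ 9 ∧ g' ≤ 9 ∧ g + g' = G :=
    ⟨min G 9, G - min G 9, by omega, by omega, by omega⟩
  refine ⟨[a, 0, 0, a], [c, e, c], [c', e', c'], [F, F], [0, 0], [g], [g'],
    good_abba (by omega) (by omega), good_aba (by omega) (by omega),
    good_aba (by omega) (by omega), good_pair (by omega), good_pair (by omega),
    good_single (by omega), good_single (by omega),
    rfl, rfl, rfl, rfl, rfl, rfl, rfl, ?_⟩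
  rw [ofDigits_abba, ofDigits_aba, ofDigits_aba, ofDigits_two, ofDigits_two,
    ofDigits_one, ofDigits_one]
  omega



lemma rows_step (L : ℕ) (hL : 5 ≤ L)
    (IH : ∀ n', 10 ^ (L - 2 - 2) ≤ n' → n' < 10 ^ (L - 2) → Rows (L - 2) n')
    (n : ℕ) (h1 : 10 ^ (L - 2) ≤ n) (h2 : n < 10 ^ L) : Rows L n := by
  obtain ⟨u, hu⟩ : ∃ u, (10:ℕ) ^ (L - 4) = u := ⟨_, rfl⟩
  have hu10 : 10 ≤ u := by
    rw [← hu]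
    calc (10:ℕ) = 10 ^ 1 := (pow_one 10).symm
    _ ≤ 10 ^ (L - 4) := Nat.pow_le_pow_right (by norm_num) (by omega)
  have hudvd : (10:ℕ) ∣ u := by
    rw [← hu]; exact dvd_pow_self 10 (by omega)
  have hp3 : (10:ℕ) ^ (L - 3) = 10 * u := by
    have e : L - 3 = 1 + (L - 4) := by omega
    rw [e, pow_add, pow_one, hu]
  have hp2 : (10:ℕ) ^ (L - 2) = 100 * u := by
    have e : L - 2 = 2 + (L - 4) := by omega
    rw [e, pow_add, hu]; norm_num
  have hp1 : (10:ℕ) ^ (L - 1) = 1000 * u := by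
    have e : L - 1 = 3 + (L - 4) := by omega
    rw [e, pow_add, hu]; norm_num
  have hp0 : (10:ℕ) ^ L = 10000 * u := by
    have e : L = 4 + (L - 4) := by omega
    rw [e, pow_add, hu]; norm_num
  rw [hp2] at h1
  rw [hp0] at h2
  obtain ⟨c1, m1, hc1, he1, hl1, hr1⟩ :=
    pick (1000 * u) n (44 * u) (by omega) (by omega) (by omega) (by omega)
  obtain ⟨c2, m2, hc2, he2, hl2, hr2⟩ :=
    pick (100 * u) m1 (44 * u) (by omega) (by omega) (by omega) (by omega)
  obtain ⟨c3, m3, hc3, he3, hl3, hr3⟩ :=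
    pick (10 * u) m2 (44 * u) (by omega) (by omega) (by omega) (by omega)
  obtain ⟨w, hw⟩ := hudvd
  obtain ⟨c4, hc4d⟩ : ∃ c4, m3 % 10 = c4 := ⟨_, rfl⟩
  have hc4 : c4 ≤ 9 := by omega
  obtain ⟨X, hX⟩ : ∃ X, c4 * w = X := ⟨_, rfl⟩
  obtain ⟨Y, hY⟩ : ∃ Y, c4 * u = Y := ⟨_, rfl⟩
  have hXY : Y = 10 * X := by rw [← hX, ← hY, hw]; ring
  have hY9 : Y ≤ 9 * u := by rw [← hY]; exact Nat.mul_le_mul_right u hc4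
  obtain ⟨n', hn'⟩ : ∃ n', m3 / 10 - X = n' := ⟨_, rfl⟩
  have key : m3 = Y + c4 + 10 * n' := by omega
  have hn'lo : u ≤ n' := by omega
  have hn'hi : n' < 100 * u := by omega
  obtain ⟨A', B', C', D', E', F', G', gA, gB, gC, gD, gE, gF, gG,
    lA, lB, lC, lD, lE, lF, lG, hsum'⟩ :=
    IH n' (by rw [show L - 2 - 2 = L - 4 by omega, hu]; exact hn'lo)
      (by rw [hp2]; exact hn'hi)
  refine ⟨c1 :: (A' ++ [c1]), c2 :: (B' ++ [c2]), 0 :: (C' ++ [0]),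
      c3 :: (D' ++ [c3]), 0 :: (E' ++ [0]), c4 :: (F' ++ [c4]), 0 :: (G' ++ [0]),
    good_sandwich (by omega) gA, good_sandwich (by omega) gB, good_sandwich (by omega) gC,
    good_sandwich (by omega) gD, good_sandwich (by omega) gE, good_sandwich (by omega) gF,
    good_sandwich (by omega) gG, ?_, ?_, ?_, ?_, ?_, ?_, ?_, ?_⟩
  · rw [length_sandwich, lA]; omega
  · rw [length_sandwich, lB]; omega
  · rw [length_sandwich, lC]; omega
  · rw [length_sandwich, lD]; omega
  · rw [length_sandwich, lE]; omega
  · rw [length_sandwich, lF]; omega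
  · rw [length_sandwich, lG]; omega
  · rw [ofDigits_sandwich, ofDigits_sandwich, ofDigits_sandwich, ofDigits_sandwich,
      ofDigits_sandwich, ofDigits_sandwich, ofDigits_sandwich,
      lA, lB, lC, lD, lE, lF, lG]
    rw [show L - 2 + 1 = L - 1 by omega, show L - 2 - 1 + 1 = L - 2 by omega,
      show L - 2 - 2 + 1 = L - 3 by omega, show L - 2 - 3 + 1 = L - 4 by omega,
      hp1, hp2, hp3, hu]
    rw [← hY] at key
    rw [he1, he2, he3, key, ← hsum']
    ring

lemma rows_main : ∀ L, 3 ≤ L → ∀ n, 10 ^ (L - 2) ≤ n → n < 10 ^ L → Rows L n := by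
  intro L
  induction L using Nat.strong_induction_on with
  | _ L IH =>
    intro hL3 n h1 h2
    by_cases h3 : L = 3
    · subst h3
      exact rows_three n (by simpa using h1) (by simpa using h2)
    by_cases h4 : L = 4
    · subst h4
      exact rows_four n (by simpa using h1) (by simpa using h2)
    exact rows_step L (by omega)
      (fun n' a b => IH (L - 2) (by omega) (by omega) n' a b) n h1 h2


lemma isPal_ofDigits {l : List ℕ} (hp : l.Palindrome) (hd : ∀ d ∈ l, d < 10)
    (hne : l ≠ []) (hlast : l.getLast hne ≠ 0) : IsPal (Nat.ofDigits 10 l) := by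
  unfold IsPal
  rw [Nat.digits_ofDigits 10 (by norm_num) l hd (fun _ => hlast)]
  exact hp

lemma sandwich_isPal {l : List ℕ} {c : ℕ} (hc1 : 1 ≤ c) (hc : c < 10) (g : Good l) :
    IsPal (Nat.ofDigits 10 (c :: (l ++ [c]))) := by
  have hne : (c :: (l ++ [c])) ≠ [] := by simp
  refine isPal_ofDigits (good_sandwich hc g).1 (good_sandwich hc g).2 hne ?_
  have : (c :: (l ++ [c])).getLast hne = c := by
    have h2 : ((c :: l) ++ [c]).getLast (by simp) = c := List.getLast_concat
    simpa using h2
  omega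

lemma first_decomp (L n : ℕ) (hL : 5 ≤ L) (h1 : 2 * 10 ^ (L - 1) ≤ n) (h2 : n < 10 ^ L) :
    ∃ l : List ℕ, l.length = 7 ∧ (∀ p ∈ l, IsPal p) ∧ l.sum = n := by
  obtain ⟨u, hu⟩ : ∃ u, (10:ℕ) ^ (L - 4) = u := ⟨_, rfl⟩
  have hu10 : 10 ≤ u := by
    rw [← hu]
    calc (10:ℕ) = 10 ^ 1 := (pow_one 10).symm
    _ ≤ 10 ^ (L - 4) := Nat.pow_le_pow_right (by norm_num) (by omega)
  have hudvd : (10:ℕ) ∣ u := by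
    rw [← hu]; exact dvd_pow_self 10 (by omega)
  have hp3 : (10:ℕ) ^ (L - 3) = 10 * u := by
    have e : L - 3 = 1 + (L - 4) := by omega
    rw [e, pow_add, pow_one, hu]
  have hp2 : (10:ℕ) ^ (L - 2) = 100 * u := by
    have e : L - 2 = 2 + (L - 4) := by omega
    rw [e, pow_add, hu]; norm_num
  have hp1 : (10:ℕ) ^ (L - 1) = 1000 * u := by
    have e : L - 1 = 3 + (L - 4) := by omega
    rw [e, pow_add, hu]; norm_num
  have hp0 : (10:ℕ) ^ L = 10000 * u := by
    have e : L = 4 + (L - 4) := by omega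
    rw [e, pow_add, hu]; norm_num
  rw [hp1] at h1
  rw [hp0] at h2
  obtain ⟨nh, he0⟩ : ∃ nh, n = 1222 * u + 7 + nh := ⟨n - (1222 * u + 7), by omega⟩
  obtain ⟨e1, m1, hc1, he1, hl1, hr1⟩ :=
    pick (1000 * u) nh (44 * u) (by omega) (by omega) (by omega) (by omega)
  have he18 : e1 ≤ 8 := by
    by_contra hcon
    have h9 : 9 ≤ e1 := by omega
    have : 1000 * u * 9 ≤ 1000 * u * e1 := Nat.mul_le_mul_left _ h9
    omega
  obtain ⟨E2, m2, hc2, he2, hl2, hr2⟩ :=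
    pick (100 * u) m1 (44 * u) (by omega) (by omega) (by omega) (by omega)
  obtain ⟨E3, m3, hc3, he3, hl3, hr3⟩ :=
    pick (10 * u) m2 (44 * u) (by omega) (by omega) (by omega) (by omega)
  obtain ⟨w, hw⟩ := hudvd
  obtain ⟨E4, hc4d⟩ : ∃ c4, m3 % 10 = c4 := ⟨_, rfl⟩
  have hc4 : E4 ≤ 9 := by omega
  obtain ⟨X, hX⟩ : ∃ X, E4 * w = X := ⟨_, rfl⟩
  obtain ⟨Y, hY⟩ : ∃ Y, E4 * u = Y := ⟨_, rfl⟩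
  have hXY : Y = 10 * X := by rw [← hX, ← hY, hw]; ring
  have hY9 : Y ≤ 9 * u := by rw [← hY]; exact Nat.mul_le_mul_right u hc4
  obtain ⟨n', hn'⟩ : ∃ n', m3 / 10 - X = n' := ⟨_, rfl⟩
  have key : m3 = Y + E4 + 10 * n' := by omega
  rw [← hY] at key
  have hn'lo : u ≤ n' := by omega
  have hn'hi : n' < 100 * u := by omega
  obtain ⟨A', B', C', D', E', F', G', gA, gB, gC, gD, gE, gF, gG,
    lA, lB, lC, lD, lE, lF, lG, hsum'⟩ :=
    rows_main (L - 2) (by omega) n'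
      (by rw [show L - 2 - 2 = L - 4 by omega, hu]; exact hn'lo)
      (by rw [hp2]; exact hn'hi)
  obtain ⟨e2a, e2b, h2a, h2b, hE2⟩ : ∃ x y, x ≤ 8 ∧ y ≤ 8 ∧ x + y = E2 :=
    ⟨min E2 8, E2 - min E2 8, by omega, by omega, by omega⟩
  obtain ⟨e3a, e3b, h3a, h3b, hE3⟩ : ∃ x y, x ≤ 8 ∧ y ≤ 8 ∧ x + y = E3 :=
    ⟨min E3 8, E3 - min E3 8, by omega, by omega, by omega⟩
  obtain ⟨e4a, e4b, h4a, h4b, hE4⟩ : ∃ x y, x ≤ 8 ∧ y ≤ 8 ∧ x + y = E4 :=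
    ⟨min E4 8, E4 - min E4 8, by omega, by omega, by omega⟩
  refine ⟨[Nat.ofDigits 10 ((1 + e1) :: (A' ++ [1 + e1])),
      Nat.ofDigits 10 ((1 + e2a) :: (B' ++ [1 + e2a])),
      Nat.ofDigits 10 ((1 + e2b) :: (C' ++ [1 + e2b])),
      Nat.ofDigits 10 ((1 + e3a) :: (D' ++ [1 + e3a])),
      Nat.ofDigits 10 ((1 + e3b) :: (E' ++ [1 + e3b])),
      Nat.ofDigits 10 ((1 + e4a) :: (F' ++ [1 + e4a])),
      Nat.ofDigits 10 ((1 + e4b) :: (G' ++ [1 + e4b]))], rfl, ?_, ?_⟩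
  · intro p hp
    simp only [List.mem_cons, List.not_mem_nil, or_false] at hp
    rcases hp with rfl | rfl | rfl | rfl | rfl | rfl | rfl
    · exact sandwich_isPal (by omega) (by omega) gA
    · exact sandwich_isPal (by omega) (by omega) gB
    · exact sandwich_isPal (by omega) (by omega) gC
    · exact sandwich_isPal (by omega) (by omega) gD
    · exact sandwich_isPal (by omega) (by omega) gE
    · exact sandwich_isPal (by omega) (by omega) gF
    · exact sandwich_isPal (by omega) (by omega) gG
  · show Nat.ofDigits 10 _ + (Nat.ofDigits 10 _ + (Nat.ofDigits 10 _ + (Nat.ofDigits 10 _ +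
      (Nat.ofDigits 10 _ + (Nat.ofDigits 10 _ + (Nat.ofDigits 10 _ + 0)))))) = n
    rw [ofDigits_sandwich, ofDigits_sandwich, ofDigits_sandwich, ofDigits_sandwich,
      ofDigits_sandwich, ofDigits_sandwich, ofDigits_sandwich,
      lA, lB, lC, lD, lE, lF, lG]
    rw [show L - 2 + 1 = L - 1 by omega, show L - 2 - 1 + 1 = L - 2 by omega,
      show L - 2 - 2 + 1 = L - 3 by omega, show L - 2 - 3 + 1 = L - 4 by omega,
      hp1, hp2, hp3, hu]
    rw [he0, he1, he2, he3, key, ← hsum', ← hE2, ← hE3, ← hE4]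
    ring


lemma dense (s x : ℕ) (hs : 2 ≤ s) (h1 : 10 ^ (2 * s - 2) ≤ x) (h2 : x < 10 ^ (2 * s)) :
    ∃ p, IsPal p ∧ x < p + 10 ^ s ∧ p < x + 10 ^ s := by
  have hP : (0:ℕ) < 10 ^ s := pow_pos (by norm_num) _
  by_cases hxb : 10 ^ (2 * s - 1) ≤ x
  · -- even length palindrome
    obtain ⟨t, ht⟩ : ∃ t, x / 10 ^ s = t := ⟨_, rfl⟩
    have hts : 10 ^ (s - 1) ≤ t := by
      rw [← ht, Nat.le_div_iff_mul_le hP, ← pow_add]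
      calc (10:ℕ) ^ (s - 1 + s) = 10 ^ (2 * s - 1) := by congr 1; omega
      _ ≤ x := hxb
    have htlt : t < 10 ^ s := by
      rw [← ht, Nat.div_lt_iff_lt_mul hP, ← pow_add]
      calc x < 10 ^ (2 * s) := h2
      _ = 10 ^ (s + s) := by congr 1; omega
    have ht0 : t ≠ 0 := by
      have : (0:ℕ) < 10 ^ (s - 1) := pow_pos (by norm_num) _
      omega
    have hlen : (Nat.digits 10 t).length = s := by
      rw [Nat.digits_len 10 t (by norm_num) ht0]
      have : Nat.log 10 t = s - 1 :=
        Nat.log_eq_of_pow_le_of_lt_pow hts (by rw [show s - 1 + 1 = s by omega]; exact htlt)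
      omega
    have hdne : Nat.digits 10 t ≠ [] := Nat.digits_ne_nil_iff_ne_zero.mpr ht0
    have hrne : (Nat.digits 10 t).reverse ++ Nat.digits 10 t ≠ [] := by simp [hdne]
    refine ⟨Nat.ofDigits 10 ((Nat.digits 10 t).reverse ++ Nat.digits 10 t), ?_, ?_, ?_⟩
    · refine isPal_ofDigits ?_ ?_ hrne ?_
      · apply List.Palindrome.of_reverse_eq
        simp
      · intro d hd
        rcases List.mem_append.mp hd with hd | hd
        · exact Nat.digits_lt_base (by norm_num) (List.mem_reverse.mp hd)
        · exact Nat.digits_lt_base (by norm_num) hd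
      · rw [List.getLast_append_of_ne_nil (h₂ := hdne)]
        exact Nat.getLast_digit_ne_zero 10 ht0
    all_goals {
      rw [Nat.ofDigits_append, Nat.ofDigits_digits, List.length_reverse, hlen]
      have hr : Nat.ofDigits 10 (Nat.digits 10 t).reverse < 10 ^ s := by
        have := Nat.ofDigits_lt_base_pow_length (b := 10) (l := (Nat.digits 10 t).reverse)
          (by norm_num) (fun d hd => Nat.digits_lt_base (by norm_num) (List.mem_reverse.mp hd))
        rwa [List.length_reverse, hlen] at this
      have hdm : 10 ^ s * (x / 10 ^ s) + x % 10 ^ s = x := Nat.div_add_mod x (10 ^ s)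
      have hmod : x % 10 ^ s < 10 ^ s := Nat.mod_lt _ hP
      rw [ht] at hdm
      obtain ⟨M, hM⟩ : ∃ M, 10 ^ s * t = M := ⟨_, rfl⟩
      rw [hM] at hdm ⊢
      omega }
  · -- odd length palindrome
    push_neg at hxb
    obtain ⟨t, ht⟩ : ∃ t, x / 10 ^ (s - 1) = t := ⟨_, rfl⟩
    have hQ : (0:ℕ) < 10 ^ (s - 1) := pow_pos (by norm_num) _
    have hts : 10 ^ (s - 1) ≤ t := by
      rw [← ht, Nat.le_div_iff_mul_le hQ, ← pow_add]
      calc (10:ℕ) ^ (s - 1 + (s - 1)) = 10 ^ (2 * s - 2) := by congr 1; omega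
      _ ≤ x := h1
    have htlt : t < 10 ^ s := by
      rw [← ht, Nat.div_lt_iff_lt_mul hQ, ← pow_add]
      calc x < 10 ^ (2 * s - 1) := hxb
      _ = 10 ^ (s + (s - 1)) := by congr 1; omega
    have ht10 : 10 ≤ t := by
      have h10 : (10:ℕ) ^ 1 ≤ 10 ^ (s - 1) := Nat.pow_le_pow_right (by norm_num) (by omega)
      simp at h10; omega
    have ht0 : t ≠ 0 := by omega
    have hq0 : t / 10 ≠ 0 := by omega
    have hlen : (Nat.digits 10 t).length = s := by
      rw [Nat.digits_len 10 t (by norm_num) ht0]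
      have : Nat.log 10 t = s - 1 :=
        Nat.log_eq_of_pow_le_of_lt_pow hts (by rw [show s - 1 + 1 = s by omega]; exact htlt)
      omega
    have hsplit : Nat.digits 10 t = t % 10 :: Nat.digits 10 (t / 10) :=
      Nat.digits_def' (by norm_num) (by omega)
    have hqne : Nat.digits 10 (t / 10) ≠ [] := Nat.digits_ne_nil_iff_ne_zero.mpr hq0
    have hrne : (Nat.digits 10 t).reverse ++ Nat.digits 10 (t / 10) ≠ [] := by simp [hqne]
    have hqx : t / 10 = x / 10 ^ s := by
      rw [← ht, Nat.div_div_eq_div_mul, ← pow_succ, show s - 1 + 1 = s by omega]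
    refine ⟨Nat.ofDigits 10 ((Nat.digits 10 t).reverse ++ Nat.digits 10 (t / 10)), ?_, ?_, ?_⟩
    · refine isPal_ofDigits ?_ ?_ hrne ?_
      · apply List.Palindrome.of_reverse_eq
        rw [hsplit]
        simp
      · intro d hd
        rcases List.mem_append.mp hd with hd | hd
        · exact Nat.digits_lt_base (by norm_num) (List.mem_reverse.mp hd)
        · have : d ∈ Nat.digits 10 t := by rw [hsplit]; exact List.mem_cons_of_mem _ hd
          exact Nat.digits_lt_base (by norm_num) this
      · rw [List.getLast_append_of_ne_nil (h₂ := hqne)]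
        exact Nat.getLast_digit_ne_zero 10 hq0
    all_goals {
      rw [Nat.ofDigits_append, Nat.ofDigits_digits, List.length_reverse, hlen, hqx]
      have hr : Nat.ofDigits 10 (Nat.digits 10 t).reverse < 10 ^ s := by
        have := Nat.ofDigits_lt_base_pow_length (b := 10) (l := (Nat.digits 10 t).reverse)
          (by norm_num) (fun d hd => Nat.digits_lt_base (by norm_num) (List.mem_reverse.mp hd))
        rwa [List.length_reverse, hlen] at this
      have hdm : 10 ^ s * (x / 10 ^ s) + x % 10 ^ s = x := Nat.div_add_mod x (10 ^ s)
      have hmod : x % 10 ^ s < 10 ^ s := Nat.mod_lt _ hP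
      obtain ⟨M, hM⟩ : ∃ M, 10 ^ s * (x / 10 ^ s) = M := ⟨_, rfl⟩
      rw [hM] at hdm ⊢
      omega }


def PalList (n k : ℕ) : Prop :=
  ∃ l : List ℕ, l.length ≤ k ∧ (∀ p ∈ l, IsPal p) ∧ l.sum = n

lemma PalList.mono {n k k' : ℕ} (h : PalList n k) (hk : k ≤ k') : PalList n k' := by
  obtain ⟨l, h1, h2, h3⟩ := h
  exact ⟨l, le_trans h1 hk, h2, h3⟩

lemma PalList.cons {p m k : ℕ} (hp : IsPal p) (h : PalList m k) : PalList (p + m) (k + 1) := by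
  obtain ⟨l, h1, h2, h3⟩ := h
  refine ⟨p :: l, by simpa using h1, ?_, by simp [h3]⟩
  intro q hq
  rcases List.mem_cons.mp hq with rfl | hq
  · exact hp
  · exact h2 q hq

lemma isPal_digit {n : ℕ} (h : n < 10) : IsPal n := by
  rcases Nat.eq_zero_or_pos n with rfl | hpos
  · exact isPal_zero
  · unfold IsPal
    rw [Nat.digits_def' (by norm_num : (1:ℕ) < 10) hpos, Nat.mod_eq_of_lt h,
      Nat.div_eq_of_lt h]
    simpa using List.Palindrome.singleton n

lemma pal_single {n : ℕ} (h : IsPal n) : PalList n 1 := by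
  refine ⟨[n], by simp, ?_, by simp⟩
  intro q hq
  rcases List.mem_cons.mp hq with rfl | hq
  · exact h
  · simp at hq

lemma isPal_11 {a : ℕ} (h : a ≤ 9) : IsPal (11 * a) := by
  rcases Nat.eq_zero_or_pos a with rfl | hpos
  · simpa using isPal_zero
  · have h2 := sandwich_isPal (l := []) (c := a) hpos (by omega) good_nil
    rw [show (a :: ([] ++ [a])) = [a, a] from rfl, ofDigits_two] at h2
    exact h2

lemma isPal_aba {a b : ℕ} (ha1 : 1 ≤ a) (ha : a ≤ 9) (hb : b ≤ 9) :
    IsPal (101 * a + 10 * b) := by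
  have h2 := sandwich_isPal (l := [b]) (c := a) ha1 (by omega) (good_single (by omega))
  rw [show (a :: ([b] ++ [a])) = [a, b, a] from rfl, ofDigits_aba] at h2
  exact h2

lemma isPal_abba {a b : ℕ} (ha1 : 1 ≤ a) (ha : a ≤ 9) (hb : b ≤ 9) :
    IsPal (1001 * a + 110 * b) := by
  have h2 := sandwich_isPal (l := [b, b]) (c := a) ha1 (by omega) (good_pair (by omega))
  rw [show (a :: ([b, b] ++ [a])) = [a, b, b, a] from rfl, ofDigits_abba] at h2
  exact h2

lemma small2 (n : ℕ) (h : n < 100) : PalList n 3 := by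
  by_cases h10 : n < 10
  · exact (pal_single (isPal_digit h10)).mono (by norm_num)
  push_neg at h10
  obtain ⟨a, ha⟩ : ∃ a, n / 10 = a := ⟨_, rfl⟩
  obtain ⟨b, hb⟩ : ∃ b, n % 10 = b := ⟨_, rfl⟩
  by_cases hba : a ≤ b
  · have heq : n = 11 * a + (b - a) := by omega
    rw [heq]
    exact (PalList.cons (isPal_11 (by omega)) (pal_single (isPal_digit (by omega)))).mono
      (by norm_num)
  push_neg at hba
  by_cases he9 : n - 11 * (a - 1) ≤ 9
  · have heq : n = 11 * (a - 1) + (n - 11 * (a - 1)) := by omega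
    rw [heq]
    exact (PalList.cons (isPal_11 (by omega)) (pal_single (isPal_digit (by omega)))).mono
      (by norm_num)
  · have heq : n = 11 * (a - 1) + (9 + 1) := by omega
    rw [heq]
    exact PalList.cons (isPal_11 (by omega))
      (PalList.cons (isPal_digit (by norm_num)) (pal_single (isPal_digit (by norm_num))))

lemma small3 (n : ℕ) (h : n < 1000) : PalList n 4 := by
  by_cases h100 : n < 100
  · exact (small2 n h100).mono (by norm_num)
  push_neg at h100
  have hdd2 : n / 10 / 10 = n / 100 := by rw [Nat.div_div_eq_div_mul]
  obtain ⟨A, hA⟩ : ∃ a, n / 100 = a := ⟨_, rfl⟩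
  obtain ⟨B, hB⟩ : ∃ b, n / 10 % 10 = b := ⟨_, rfl⟩
  obtain ⟨C, hC⟩ : ∃ c, n % 10 = c := ⟨_, rfl⟩
  have hA1 : 1 ≤ A := by omega
  have hA9 : A ≤ 9 := by omega
  by_cases hAC : A ≤ C
  · have heq : n = (101 * A + 10 * B) + (C - A) := by omega
    rw [heq]
    exact (PalList.cons (isPal_aba hA1 hA9 (by omega)) (pal_single (isPal_digit (by omega)))).mono
      (by norm_num)
  push_neg at hAC
  by_cases hB1 : 1 ≤ B
  · have heq : n = (101 * A + 10 * (B - 1)) + (10 + C - A) := by omega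
    rw [heq]
    exact (PalList.cons (isPal_aba hA1 hA9 (by omega)) (pal_single (isPal_digit (by omega)))).mono
      (by norm_num)
  push_neg at hB1
  by_cases hA1' : A = 1
  · -- n = 100
    have heq : n = 11 * 9 + 1 := by omega
    rw [heq]
    exact (PalList.cons (isPal_11 (by norm_num)) (pal_single (isPal_digit (by norm_num)))).mono
      (by norm_num)
  · have hA2 : 2 ≤ A := by omega
    by_cases hr : n - (101 * (A - 1) + 90) ≤ 9
    · have heq : n = (101 * (A - 1) + 10 * 9) + (n - (101 * (A - 1) + 90)) := by omega
      rw [heq]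
      exact (PalList.cons (isPal_aba (by omega) (by omega) (by norm_num))
        (pal_single (isPal_digit (by omega)))).mono (by norm_num)
    · have heq : n = (101 * (A - 1) + 10 * 9) + (9 + 1) := by omega
      rw [heq]
      exact (PalList.cons (isPal_aba (by omega) (by omega) (by norm_num))
        (PalList.cons (isPal_digit (by norm_num))
          (pal_single (isPal_digit (by norm_num))))).mono (by norm_num)

lemma small4 (n : ℕ) (h : n < 10000) : PalList n 6 := by
  by_cases h1000 : n < 1000
  · exact (small3 n h1000).mono (by norm_num)
  push_neg at h1000
  have hdd : n / 100 / 10 = n / 1000 := by rw [Nat.div_div_eq_div_mul]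
  have hdd2 : n / 10 / 10 = n / 100 := by rw [Nat.div_div_eq_div_mul]
  obtain ⟨A, hA⟩ : ∃ a, n / 1000 = a := ⟨_, rfl⟩
  obtain ⟨B, hB⟩ : ∃ b, n / 100 % 10 = b := ⟨_, rfl⟩
  have hA1 : 1 ≤ A := by omega
  have hA9 : A ≤ 9 := by omega
  by_cases hc1 : 1001 * A + 110 * B ≤ n ∧ n - (1001 * A + 110 * B) < 100
  · have heq : n = (1001 * A + 110 * B) + (n - (1001 * A + 110 * B)) := by omega
    rw [heq]
    exact (PalList.cons (isPal_abba hA1 hA9 (by omega)) (small2 _ hc1.2)).mono (by norm_num)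
  by_cases hB1 : 1 ≤ B
  · -- r := n - (1001A + 110(B-1)) ∈ [11, 109]
    have hrlow : 11 ≤ n - (1001 * A + 110 * (B - 1)) := by omega
    have hrhi : n - (1001 * A + 110 * (B - 1)) ≤ 109 := by omega
    by_cases hr : n - (1001 * A + 110 * (B - 1)) < 100
    · have heq : n = (1001 * A + 110 * (B - 1)) + (n - (1001 * A + 110 * (B - 1))) := by omega
      rw [heq]
      exact (PalList.cons (isPal_abba hA1 hA9 (by omega)) (small2 _ hr)).mono (by norm_num)
    · have heq : n = (1001 * A + 110 * (B - 1)) +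
          (11 * 9 + (n - (1001 * A + 110 * (B - 1)) - 99)) := by omega
      rw [heq]
      refine (PalList.cons (isPal_abba hA1 hA9 (by omega))
        (PalList.cons (isPal_11 (by norm_num)) (small2 _ (by omega)))).mono (by norm_num)
  push_neg at hB1
  by_cases hA1' : A = 1
  · -- n = 1000
    have heq : n = (101 * 9 + 10 * 9) + 1 := by omega
    rw [heq]
    exact (PalList.cons (isPal_aba (by norm_num) (by norm_num) (by norm_num))
      (pal_single (isPal_digit (by norm_num)))).mono (by norm_num)
  · have hA2 : 2 ≤ A := by omega
    have heq : n = (1001 * (A - 1) + 110 * 9) + (n - (1001 * (A - 1) + 990)) := by omega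
    have hrb : n - (1001 * (A - 1) + 990) < 100 := by omega
    rw [heq]
    exact (PalList.cons (isPal_abba (by omega) (by omega) (by norm_num))
      (small2 _ hrb)).mono (by norm_num)


lemma tail_decomp (L n p : ℕ) (hL5 : 5 ≤ L) (hple : p ≤ n)
    (hm1 : 2 * 10 ^ (L - 2) ≤ n - p) (hm2 : n - p < 10 ^ (L - 1)) (hp : IsPal p) :
    ∃ l : List ℕ, l.length ≤ 8 ∧ (∀ q ∈ l, IsPal q) ∧ l.sum = n := by
  by_cases hL6 : 6 ≤ L
  · obtain ⟨l, hl7, hpal, hsum⟩ := first_decomp (L - 1) (n - p) (by omega)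
      (by rw [show L - 1 - 1 = L - 2 by omega]; exact hm1) hm2
    refine ⟨p :: l, by simp [hl7], ?_, by simp [hsum]; omega⟩
    intro q hq
    rcases List.mem_cons.mp hq with rfl | hq
    · exact hp
    · exact hpal q hq
  · have hLe : L = 5 := by omega
    subst hLe
    obtain ⟨l, hl, hpal, hsum⟩ := small4 (n - p) (by norm_num at hm2; omega)
    refine ⟨p :: l, by simp; omega, ?_, by simp [hsum]; omega⟩
    intro q hq
    rcases List.mem_cons.mp hq with rfl | hq
    · exact hp
    · exact hpal q hq

lemma big_decomp (n : ℕ) (h : 10000 ≤ n) :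
    ∃ l : List ℕ, l.length ≤ 8 ∧ (∀ p ∈ l, IsPal p) ∧ l.sum = n := by
  obtain ⟨L, hLdef⟩ : ∃ L, Nat.log 10 n + 1 = L := ⟨_, rfl⟩
  have hn0 : n ≠ 0 := by omega
  have hlow : 10 ^ (L - 1) ≤ n := by
    rw [show L - 1 = Nat.log 10 n by omega]
    exact Nat.pow_log_le_self 10 hn0
  have hhigh : n < 10 ^ L := by
    rw [← hLdef]
    exact Nat.lt_pow_succ_log_self (by norm_num) n
  have hL5 : 5 ≤ L := by
    have h4 : 4 ≤ Nat.log 10 n := by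
      rw [Nat.le_log_iff_pow_le (by norm_num) hn0]
      simpa using h
    omega
  by_cases hbig : 2 * 10 ^ (L - 1) ≤ n
  · obtain ⟨l, hl7, hpal, hsum⟩ := first_decomp L n hL5 hbig hhigh
    exact ⟨l, by omega, hpal, hsum⟩
  push_neg at hbig
  obtain ⟨x, hx⟩ : ∃ x, n - 6 * 10 ^ (L - 2) = x := ⟨_, rfl⟩
  have hP12 : (10:ℕ) ^ (L - 1) = 10 * 10 ^ (L - 2) := by
    rw [← pow_succ', show L - 2 + 1 = L - 1 by omega]
  have hP01 : (10:ℕ) ^ L = 10 * 10 ^ (L - 1) := by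
    rw [← pow_succ', show L - 1 + 1 = L by omega]
  by_cases hxA : x < 10 ^ (L - 1)
  · -- use s = L / 2
    obtain ⟨s, hsdef⟩ : ∃ s, L / 2 = s := ⟨_, rfl⟩
    have hs2 : 2 ≤ s := by omega
    have hpar : 2 * s = L ∨ 2 * s + 1 = L := by omega
    have hgap : (10:ℕ) ^ s ≤ 10 ^ (L - 2) := Nat.pow_le_pow_right (by norm_num) (by omega)
    have hd1 : 10 ^ (2 * s - 2) ≤ x := by
      rcases hpar with hpp | hpp
      · rw [show 2 * s - 2 = L - 2 by omega]
        omega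
      · rw [show 2 * s - 2 = L - 3 by omega]
        have hmono : (10:ℕ) ^ (L - 3) ≤ 10 ^ (L - 2) :=
          Nat.pow_le_pow_right (by norm_num) (by omega)
        omega
    have hd2 : x < 10 ^ (2 * s) := by
      have hmono : (10:ℕ) ^ (L - 1) ≤ 10 ^ (2 * s) :=
        Nat.pow_le_pow_right (by norm_num) (by omega)
      omega
    obtain ⟨p, hp, hb1, hb2⟩ := dense s x hs2 hd1 hd2
    exact tail_decomp L n p hL5 (by omega) (by omega) (by omega) hp
  · -- use s = (L + 1) / 2
    push_neg at hxA
    obtain ⟨s, hsdef⟩ : ∃ s, (L + 1) / 2 = s := ⟨_, rfl⟩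
    have hs2 : 2 ≤ s := by omega
    have hpar : 2 * s = L ∨ 2 * s = L + 1 := by omega
    have hgap : (10:ℕ) ^ s ≤ 10 ^ (L - 2) := Nat.pow_le_pow_right (by norm_num) (by omega)
    have hd1 : 10 ^ (2 * s - 2) ≤ x := by
      have hmono : (10:ℕ) ^ (2 * s - 2) ≤ 10 ^ (L - 1) :=
        Nat.pow_le_pow_right (by norm_num) (by omega)
      omega
    have hd2 : x < 10 ^ (2 * s) := by
      have hmono : (10:ℕ) ^ L ≤ 10 ^ (2 * s) :=
        Nat.pow_le_pow_right (by norm_num) (by omega)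
      omega
    obtain ⟨p, hp, hb1, hb2⟩ := dense s x hs2 hd1 hd2
    exact tail_decomp L n p hL5 (by omega) (by omega) (by omega) hp

end PalAux

theorem palindromes_additive_basis :
    ∃ k : ℕ, ∀ n : ℕ, ∃ l : List ℕ, l.length ≤ k ∧ (∀ p ∈ l, IsPal p) ∧ l.sum = n := by
  refine ⟨8, fun n => ?_⟩
  by_cases h : n < 10000
  · obtain ⟨l, h1, h2, h3⟩ := PalAux.small4 n h
    exact ⟨l, by omega, h2, h3⟩
  · exact PalAux.big_decomp n (by omega)
end

section
/- Define f : {0,...,9} → {0,...,9} by f(0)=0, f(1)=1, f(2)=9, f(3)=8, f(4)=7, f(5)=6, f(6)=5, f(7)=4, f(8)=3, f(9)=2. Then for every digit d and every integer j ≥ 1, the number 10^j·d − f(d) is a decimal palindrome. -/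
def f : ℕ → ℕ
  | 0 => 0 | 1 => 1 | 2 => 9 | 3 => 8 | 4 => 7 | 5 => 6 | 6 => 5 | 7 => 4 | 8 => 3 | 9 => 2
  | _ => 0

lemma rep9 (k : ℕ) : Nat.ofDigits 10 (List.replicate k 9) + 1 = 10 ^ k := by
  induction k with
  | zero => simp [Nat.ofDigits]
  | succ n ih =>
    rw [List.replicate_succ, Nat.ofDigits_cons, pow_succ]
    push_cast
    omega

lemma rep9c (k c : ℕ) :
    Nat.ofDigits 10 (List.replicate k 9 ++ [c]) + 1 = (c + 1) * 10 ^ k := by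
  induction k with
  | zero => simp [Nat.ofDigits]
  | succ n ih =>
    rw [List.replicate_succ, List.cons_append, Nat.ofDigits_cons, pow_succ, ← mul_assoc]
    push_cast
    omega

lemma pal_digits (c k : ℕ) (hc1 : 1 ≤ c) (hc9 : c ≤ 9) :
    IsPal (Nat.ofDigits 10 (c :: (List.replicate k 9 ++ [c]))) := by
  unfold IsPal
  rw [Nat.digits_ofDigits 10 (by norm_num) _ ?_ ?_]
  · apply List.Palindrome.of_reverse_eq
    simp
  · intro l hl
    simp at hl
    rcases hl with h | h | h <;> omega
  · intro h
    rw [List.getLast_cons (by simp), List.getLast_append_right (by simp),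
      List.getLast_singleton]
    omega

lemma rep9_pal (k : ℕ) (hk : 1 ≤ k) :
    IsPal (Nat.ofDigits 10 (List.replicate k 9)) := by
  unfold IsPal
  rw [Nat.digits_ofDigits 10 (by norm_num) _ ?_ ?_]
  · apply List.Palindrome.of_reverse_eq
    simp
  · intro l hl
    simp at hl
    omega
  · intro h
    rw [List.getLast_replicate]
    omega

lemma main_eq (c k : ℕ) (hc : c ≤ 9) :
    10 ^ (k + 1) * (c + 1) - (10 - c) =
      Nat.ofDigits 10 (c :: (List.replicate k 9 ++ [c])) := by
  have h2 := rep9c k c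
  rw [Nat.ofDigits_cons]
  have h3 : 10 ^ (k + 1) * (c + 1) =
      10 * (Nat.ofDigits 10 (List.replicate k 9 ++ [c]) + 1) := by
    rw [h2, pow_succ]; ring
  omega

theorem pow_mul_sub_f_palindrome (d j : ℕ) (hd : d ≤ 9) (hj : 1 ≤ j) :
    IsPal (10 ^ j * d - f d) := by
  obtain ⟨k, rfl⟩ : ∃ k, j = k + 1 := ⟨j - 1, by omega⟩
  interval_cases d
  · simp only [f, Nat.mul_zero, Nat.zero_sub, IsPal, Nat.digits_zero]
    exact List.Palindrome.nil
  · have h := rep9 (k + 1)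
    have heq : 10 ^ (k + 1) * 1 - f 1 = Nat.ofDigits 10 (List.replicate (k + 1) 9) := by
      simp only [f]; omega
    rw [heq]
    exact rep9_pal (k + 1) (by omega)
  · have h := main_eq 1 k (by norm_num)
    have heq : 10 ^ (k + 1) * 2 - f 2 = Nat.ofDigits 10 (1 :: (List.replicate k 9 ++ [1])) := by
      rw [← h]; norm_num [f]
    rw [heq]; exact pal_digits 1 k (by norm_num) (by norm_num)
  · have h := main_eq 2 k (by norm_num)
    have heq : 10 ^ (k + 1) * 3 - f 3 = Nat.ofDigits 10 (2 :: (List.replicate k 9 ++ [2])) := by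
      rw [← h]; norm_num [f]
    rw [heq]; exact pal_digits 2 k (by norm_num) (by norm_num)
  · have h := main_eq 3 k (by norm_num)
    have heq : 10 ^ (k + 1) * 4 - f 4 = Nat.ofDigits 10 (3 :: (List.replicate k 9 ++ [3])) := by
      rw [← h]; norm_num [f]
    rw [heq]; exact pal_digits 3 k (by norm_num) (by norm_num)
  · have h := main_eq 4 k (by norm_num)
    have heq : 10 ^ (k + 1) * 5 - f 5 = Nat.ofDigits 10 (4 :: (List.replicate k 9 ++ [4])) := by
      rw [← h]; norm_num [f]
    rw [heq]; exact pal_digits 4 k (by norm_num) (by norm_num)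
  · have h := main_eq 5 k (by norm_num)
    have heq : 10 ^ (k + 1) * 6 - f 6 = Nat.ofDigits 10 (5 :: (List.replicate k 9 ++ [5])) := by
      rw [← h]; norm_num [f]
    rw [heq]; exact pal_digits 5 k (by norm_num) (by norm_num)
  · have h := main_eq 6 k (by norm_num)
    have heq : 10 ^ (k + 1) * 7 - f 7 = Nat.ofDigits 10 (6 :: (List.replicate k 9 ++ [6])) := by
      rw [← h]; norm_num [f]
    rw [heq]; exact pal_digits 6 k (by norm_num) (by norm_num)
  · have h := main_eq 7 k (by norm_num)
    have heq : 10 ^ (k + 1) * 8 - f 8 = Nat.ofDigits 10 (7 :: (List.replicate k 9 ++ [7])) := by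
      rw [← h]; norm_num [f]
    rw [heq]; exact pal_digits 7 k (by norm_num) (by norm_num)
  · have h := main_eq 8 k (by norm_num)
    have heq : 10 ^ (k + 1) * 9 - f 9 = Nat.ofDigits 10 (8 :: (List.replicate k 9 ++ [8])) := by
      rw [← h]; norm_num [f]
    rw [heq]; exact pal_digits 8 k (by norm_num) (by norm_num)
end

section
/- If a natural number n has at most K nonzero decimal digits, then n can be written as the sum of 2K+1 decimal palindromes (some possibly zero). -/
lemma isPal_small (n : ℕ) (h : n ≤ 9) : IsPal n := by
  unfold IsPal
  interval_cases n <;> exact List.Palindrome.of_reverse_eq (by simp)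

lemma ofDigits_replicate9 (j : ℕ) :
    Nat.ofDigits 10 (List.replicate j 9) = 10 ^ j - 1 := by
  induction j with
  | zero => simp
  | succ k ih =>
    rw [List.replicate_succ, Nat.ofDigits_cons, ih, pow_succ]
    have h1 : (1:ℕ) ≤ 10 ^ k := Nat.one_le_pow _ _ (by norm_num)
    omega

lemma pal2 (d j : ℕ) (hd : d ≤ 9) :
    ∃ a b, IsPal a ∧ IsPal b ∧ a + b = d * 10 ^ j := by
  rcases Nat.eq_zero_or_pos d with hd0 | hd0
  · exact ⟨0, 0, isPal_small 0 (by norm_num), isPal_small 0 (by norm_num), by simp [hd0]⟩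
  rcases Nat.eq_zero_or_pos j with hj0 | hj0
  · exact ⟨d, 0, isPal_small d hd, isPal_small 0 (by norm_num), by simp [hj0]⟩
  rcases eq_or_lt_of_le (show 1 ≤ d from hd0) with hd1 | hd2
  · -- d = 1 : 10^j = (10^j - 1) + 1
    refine ⟨Nat.ofDigits 10 (List.replicate j 9), 1, ?_, isPal_small 1 (by norm_num), ?_⟩
    · unfold IsPal
      rw [Nat.digits_ofDigits 10 (by norm_num) _ ?_ ?_]
      · exact List.Palindrome.of_reverse_eq List.reverse_replicate
      · intro l hl; have := List.eq_of_mem_replicate hl; omega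
      · intro _; rw [List.getLast_replicate]; norm_num
    · rw [ofDigits_replicate9, ← hd1]
      have h1 : (1:ℕ) ≤ 10 ^ j := Nat.one_le_pow _ _ (by norm_num)
      omega
  · -- 2 ≤ d
    obtain ⟨k, rfl⟩ : ∃ k, j = k + 1 := ⟨j - 1, by omega⟩
    set L : List ℕ := ((d - 1) :: List.replicate k 9) ++ [d - 1] with hL
    refine ⟨Nat.ofDigits 10 L, 11 - d, ?_, isPal_small _ (by omega), ?_⟩
    · unfold IsPal
      rw [Nat.digits_ofDigits 10 (by norm_num) L ?_ ?_]
      · refine List.Palindrome.of_reverse_eq ?_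
        simp [hL, List.reverse_replicate]
      · intro l hl
        simp only [hL, List.mem_cons, List.mem_append, List.mem_singleton,
          List.not_mem_nil, or_false] at hl
        rcases hl with (rfl | hl) | rfl
        · omega
        · have := List.eq_of_mem_replicate hl; omega
        · omega
      · intro h'
        simp only [hL, List.getLast_concat]
        omega
    · rw [hL, Nat.ofDigits_append, Nat.ofDigits_cons, ofDigits_replicate9,
        Nat.ofDigits_singleton, List.length_cons, List.length_replicate]
      have h1 : (1:ℕ) ≤ 10 ^ k := Nat.one_le_pow _ _ (by norm_num)
      rw [pow_succ]
      generalize 10 ^ k = x at h1 ⊢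
      zify [h1, show 1 ≤ d by omega, show d ≤ 11 by omega]
      ring

lemma aux (L : List ℕ) (hL : ∀ x ∈ L, x < 10) :
    ∀ K, (L.filter (· ≠ 0)).length ≤ K →
    ∃ p : Fin (2 * K + 1) → ℕ, (∀ i, IsPal (p i)) ∧ Nat.ofDigits 10 L = ∑ i, p i := by
  induction L using List.reverseRecOn with
  | nil =>
    intro K _
    exact ⟨fun _ => 0, fun _ => isPal_small 0 (by norm_num), by simp⟩
  | append_singleton M d ih =>
    intro K hK
    have hM : ∀ x ∈ M, x < 10 := fun x hx => hL x (by simp [hx])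
    have hd : d < 10 := hL d (by simp)
    have hof : Nat.ofDigits 10 (M ++ [d]) = Nat.ofDigits 10 M + d * 10 ^ M.length := by
      rw [Nat.ofDigits_append, Nat.ofDigits_singleton]
      ring
    rcases Nat.eq_zero_or_pos d with rfl | hd0
    · have hfil : ((M ++ [(0:ℕ)]).filter (· ≠ 0)) = M.filter (· ≠ 0) := by
        simp [List.filter_append]
      rw [hfil] at hK
      obtain ⟨p, hp, hsum⟩ := ih hM K hK
      exact ⟨p, hp, by rw [hof]; simpa using hsum⟩
    · have hfil : ((M ++ [d]).filter (· ≠ 0)).length = (M.filter (· ≠ 0)).length + 1 := by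
        simp [List.filter_append, hd0.ne']
      rw [hfil] at hK
      obtain ⟨K', rfl⟩ : ∃ K', K = K' + 1 := ⟨K - 1, by omega⟩
      obtain ⟨p, hp, hsum⟩ := ih hM K' (by omega)
      obtain ⟨a, b, ha, hb, hab⟩ := pal2 d M.length (by omega)
      have e : Fin (2 * (K' + 1) + 1) ≃ Fin (2 * K' + 1 + 1 + 1) := finCongr (by ring)
      refine ⟨(Fin.cons a (Fin.cons b p)) ∘ e, ?_, ?_⟩
      · intro i
        simp only [Function.comp]
        refine Fin.cases ha (fun i' => ?_) (e i)
        refine Fin.cases hb (fun i'' => ?_) i'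
        exact hp _
      · rw [show ∑ i, (Fin.cons a (Fin.cons b p) ∘ e) i = ∑ i, Fin.cons a (Fin.cons b p) i
          from Equiv.sum_comp e _]
        rw [Fin.sum_cons, Fin.sum_cons, hof, ← hsum, ← hab]
        ring

theorem few_nonzero_digits_sum_palindromes (n K : ℕ)
    (h : ((Nat.digits 10 n).filter (· ≠ 0)).length ≤ K) :
    ∃ p : Fin (2 * K + 1) → ℕ, (∀ i, IsPal (p i)) ∧ n = ∑ i, p i := by
  obtain ⟨p, hp, hs⟩ := aux (Nat.digits 10 n) (fun x hx => Nat.digits_lt_base (by norm_num) hx) K h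
  exact ⟨p, hp, by rwa [Nat.ofDigits_digits] at hs⟩
end

section
/- Let ℓ ≥ 5. Every natural number n with exactly ℓ decimal digits can be written as n = p₁ + p₂ + m, where p₁, p₂ are decimal palindromes and m is a natural number whose leading decimal digit is at least 5 and whose number of decimal digits is ℓ or ℓ−1. -/
lemma pal_aux (a k : ℕ) (ha : a ≤ 9) (hk : 1 ≤ k) : IsPal (a + 10 ^ (1 + k) * a) := by
  rcases Nat.eq_zero_or_pos a with rfl | hpos
  · simp only [Nat.mul_zero, Nat.add_zero, IsPal, Nat.digits_zero]
    exact List.Palindrome.nil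
  have hd : Nat.digits 10 a = [a] := by
    rw [Nat.digits_def' (by norm_num) hpos]
    rw [Nat.mod_eq_of_lt (by omega), Nat.div_eq_of_lt (by omega)]
    simp
  have h := Nat.digits_append_zeroes_append_digits (b := 10) (k := k) (m := a) (n := a)
    (by norm_num) hpos
  rw [hd] at h
  simp only [List.length_singleton] at h
  unfold IsPal
  rw [← h]
  apply List.Palindrome.of_reverse_eq
  simp

lemma len_eq {k m : ℕ} (h1 : 10 ^ k ≤ m) (h2 : m < 10 ^ (k + 1)) :
    (Nat.digits 10 m).length = k + 1 := by
  have hpos : 0 < (10:ℕ) ^ k := pow_pos (by norm_num) k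
  have hm : m ≠ 0 := by omega
  rw [Nat.digits_len 10 m (by norm_num) hm,
    Nat.log_eq_of_pow_le_of_lt_pow h1 h2]

theorem reduction_to_leading_ge_five (ℓ n : ℕ) (hℓ : 5 ≤ ℓ)
    (hn : (Nat.digits 10 n).length = ℓ) :
    ∃ p₁ p₂ m : ℕ, IsPal p₁ ∧ IsPal p₂ ∧ n = p₁ + p₂ + m ∧
      ((Nat.digits 10 m).length = ℓ ∨ (Nat.digits 10 m).length = ℓ - 1) ∧
      5 ≤ m / 10 ^ ((Nat.digits 10 m).length - 1) := by
  obtain ⟨k, rfl⟩ : ∃ k, ℓ = k + 2 := ⟨ℓ - 2, by omega⟩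
  have hk : 3 ≤ k := by omega
  have hn0 : n ≠ 0 := by
    intro h; subst h; simp at hn
  have hub : n < 10 ^ (k + 2) := by
    have := Nat.lt_base_pow_length_digits (b := 10) (m := n) (by norm_num)
    rwa [hn] at this
  have hlb : 10 ^ (k + 1) ≤ n := by
    have h := Nat.base_pow_length_digits_le 10 n (by norm_num) hn0
    rw [hn] at h
    have h10 : (10:ℕ) ^ (k + 2) = 10 * 10 ^ (k + 1) := by ring
    omega
  set P : ℕ := 10 ^ k with hP
  have hP1000 : 1000 ≤ P := by
    calc (1000 : ℕ) = 10 ^ 3 := by norm_num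
    _ ≤ 10 ^ k := Nat.pow_le_pow_right (by norm_num) hk
  have hPk1 : 10 ^ (k + 1) = 10 * P := by rw [hP]; ring
  have hPk2 : 10 ^ (k + 2) = 100 * P := by rw [hP]; ring
  set d : ℕ := n / 10 ^ (k + 1) with hd
  set e : ℕ := n / P % 10 with he
  set t : ℕ := n % P with ht
  have hPpos : 0 < P := by omega
  have hdecomp : n = d * (10 * P) + e * P + t := by
    have h2 := Nat.div_add_mod (n / P) 10
    have h3 : n / 10 ^ (k + 1) = n / P / 10 := by
      rw [hPk1, Nat.mul_comm, ← Nat.div_div_eq_div_mul]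
    rw [hd, ht, he, h3]
    calc n = P * (n / P) + n % P := (Nat.div_add_mod n P).symm
    _ = P * (10 * (n / P / 10) + n / P % 10) + n % P := by rw [h2]
    _ = n / P / 10 * (10 * P) + n / P % 10 * P + n % P := by ring
  have htP : t < P := Nat.mod_lt _ hPpos
  have he9 : e ≤ 9 := by omega
  have hd9 : d ≤ 9 := by
    have : n / 10 ^ (k + 1) < 10 := by
      apply Nat.div_lt_of_lt_mul
      rw [hPk1]; omega
    omega
  have hd1 : 1 ≤ d := by
    have : 1 ≤ n / 10 ^ (k + 1) :=
      (Nat.one_le_div_iff (pow_pos (by norm_num) _)).mpr hlb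
    omega
  by_cases hd5 : 5 ≤ d
  · refine ⟨0, 0, n, ?_, ?_, by ring, Or.inl hn, ?_⟩
    · simp only [IsPal, Nat.digits_zero]; exact List.Palindrome.nil
    · simp only [IsPal, Nat.digits_zero]; exact List.Palindrome.nil
    have hlen1 : (Nat.digits 10 n).length - 1 = k + 1 := by omega
    rw [hlen1]
    exact hd ▸ hd5
  · push_neg at hd5
    obtain ⟨a, b, ha9, hb9, hab⟩ :
        ∃ a b : ℕ, a ≤ 9 ∧ b ≤ 9 ∧ a * 10 + b + 6 = d * 10 + e := by
      by_cases he5 : e ≤ 5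
      · exact ⟨d - 1, e + 4, by omega, by omega, by omega⟩
      · exact ⟨d, e - 6, by omega, by omega, by omega⟩
    set p₁ : ℕ := a + 10 ^ (1 + k) * a with hp₁
    set p₂ : ℕ := b + 10 ^ (1 + (k - 1)) * b with hp₂
    have hp₁v : p₁ = a * (10 * P) + a := by rw [hp₁, hP]; ring
    have hp₂v : p₂ = b * P + b := by
      rw [hp₂, hP]
      have hkk : 1 + (k - 1) = k := by omega
      rw [hkk]; ring
    set m : ℕ := 6 * P + t - (a + b) with hm
    have hm' : m + (a + b) = 6 * P + t := by omega
    have key : n + (a + b) = p₁ + p₂ + (m + (a + b)) := by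
      rw [hm', hdecomp, hp₁v, hp₂v]
      calc d * (10 * P) + e * P + t + (a + b)
          = (d * 10 + e) * P + t + (a + b) := by ring
        _ = (a * 10 + b + 6) * P + t + (a + b) := by rw [hab]
        _ = a * (10 * P) + a + (b * P + b) + (6 * P + t) := by ring
    have heq : n = p₁ + p₂ + m := by omega
    have hm5 : 5 * P ≤ m := by omega
    have hm7 : m < 7 * P := by omega
    have hlen : (Nat.digits 10 m).length = k + 1 := by
      apply len_eq
      · rw [← hP]; omega
      · rw [hPk1]; omega
    refine ⟨p₁, p₂, m, pal_aux a k ha9 (by omega),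
      pal_aux b (k - 1) hb9 (by omega), heq, Or.inr (by omega), ?_⟩
    rw [hlen]
    simp only [Nat.add_sub_cancel]
    rw [← hP]
    exact (Nat.le_div_iff_mul_le hPpos).mpr (by omega)
end

section
/- For every integer m with 500 ≤ m ≤ 999, there exists h expressible as a sum of nine elements of S = {19, 29, 39, 49, 59} such that m − 80 < 2h ≤ m − 60. -/
theorem exists_h_in_nine_fold_sumset (m : ℕ) (h1 : 500 ≤ m) (h2 : m ≤ 999) :
    ∃ s : Fin 9 → ℕ, (∀ i, s i ∈ ({19, 29, 39, 49, 59} : Set ℕ)) ∧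
      m - 80 < 2 * ∑ i, s i ∧ 2 * ∑ i, s i ≤ m - 60 := by
  set a := (m - 402) / 20 with ha
  refine ⟨fun i => 19 + 10 * min 4 (a - 4 * i.val), ?_, ?_, ?_⟩
  · intro i
    have h : min 4 (a - 4 * i.val) ≤ 4 := min_le_left _ _
    simp only [Set.mem_insert_iff, Set.mem_singleton_iff]
    omega
  all_goals
    have hsum : ∑ i : Fin 9, (19 + 10 * min 4 (a - 4 * i.val)) = 171 + 10 * a := by
      have h36 : a ≤ 36 := by omega
      simp [Fin.sum_univ_succ]
      omega
    rw [hsum]; omega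
end

section
/- Let ℓ ≥ k + 6 and let n be a natural number with exactly ℓ decimal digits, leading digit at least 5, and divisible by 10^k. Then there exist digits a₁,...,a₁₈, b₁,...,b₁₈ ∈ {1,...,9} such that n − Σ_{j=1}^{18} (10^{ℓ−2}·a_j + 10^{ℓ−3}·b_j + 10^k·(a_j + b_j)) is a natural number with exactly ℓ−1 decimal digits, leading digit at least 5, and divisible by 10^{k+1}. -/
theorem split18 (A : ℕ) (h1 : 18 ≤ A) (h2 : A ≤ 162) :
    ∃ a : Fin 18 → ℕ, (∀ j, 1 ≤ a j ∧ a j ≤ 9) ∧ ∑ j, a j = A := by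
  refine ⟨fun j => A/18 + if (j:ℕ) < A % 18 then 1 else 0, fun j => ?_, ?_⟩
  · simp only
    have hm := Nat.mod_lt A (show 0 < 18 by norm_num)
    have hd := Nat.div_add_mod A 18
    split <;> omega
  · rw [Fin.sum_univ_eq_sum_range (fun i => A/18 + if i < A % 18 then 1 else 0) 18,
      Finset.sum_add_distrib, Finset.sum_const, Finset.sum_boole, Finset.card_range]
    have hm := Nat.mod_lt A (show 0 < 18 by norm_num)
    have hd := Nat.div_add_mod A 18
    have : Finset.filter (fun x => x < A % 18) (Finset.range 18) = Finset.range (A % 18) := by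
      ext x; simp; omega
    rw [this, Finset.card_range]
    simp [Nat.nsmul_eq_mul]
    omega

theorem inductive_passage (ℓ k n : ℕ) (hℓ : k + 6 ≤ ℓ)
    (hlen : (Nat.digits 10 n).length = ℓ)
    (hlead : 5 ≤ n / 10 ^ (ℓ - 1))
    (hdvd : 10 ^ k ∣ n) :
    ∃ a b : Fin 18 → ℕ,
      (∀ j, 1 ≤ a j ∧ a j ≤ 9) ∧ (∀ j, 1 ≤ b j ∧ b j ≤ 9) ∧
      (∑ j, (10 ^ (ℓ - 2) * a j + 10 ^ (ℓ - 3) * b j + 10 ^ k * (a j + b j))) ≤ n ∧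
      (Nat.digits 10 (n - ∑ j, (10 ^ (ℓ - 2) * a j + 10 ^ (ℓ - 3) * b j
          + 10 ^ k * (a j + b j)))).length = ℓ - 1 ∧
      5 ≤ (n - ∑ j, (10 ^ (ℓ - 2) * a j + 10 ^ (ℓ - 3) * b j + 10 ^ k * (a j + b j)))
          / 10 ^ (ℓ - 2) ∧
      10 ^ (k + 1) ∣ (n - ∑ j, (10 ^ (ℓ - 2) * a j + 10 ^ (ℓ - 3) * b j
          + 10 ^ k * (a j + b j))) := by
  obtain ⟨d, rfl⟩ : ∃ d, ℓ = k + d + 6 := ⟨ℓ - k - 6, by omega⟩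
  simp only [show k + d + 6 - 1 = k + d + 5 from by omega,
    show k + d + 6 - 2 = k + d + 4 from by omega,
    show k + d + 6 - 3 = k + d + 3 from by omega] at hlead ⊢
  -- abbreviations
  set P3 : ℕ := 10 ^ (k + d + 3) with hP3
  have hP3pos : 0 < P3 := pow_pos (by norm_num) _
  have hP2 : 10 ^ (k + d + 4) = 10 * P3 := by rw [hP3, ← pow_succ']
  have hP5 : 10 ^ (k + d + 5) = 100 * P3 := by
    rw [hP3, show k + d + 5 = 2 + (k + d + 3) from by omega, pow_add]; norm_num
  have hP6 : 10 ^ (k + d + 6) = 1000 * P3 := by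
    rw [hP3, show k + d + 6 = 3 + (k + d + 3) from by omega, pow_add]; norm_num
  have hkP3 : 1000 * 10 ^ k ≤ P3 := by
    rw [hP3, show k + d + 3 = (d + 3) + k from by omega, pow_add]
    exact Nat.mul_le_mul_right _ (by
      calc (1000 : ℕ) = 10 ^ 3 := by norm_num
      _ ≤ 10 ^ (d + 3) := Nat.pow_le_pow_right (by norm_num) (by omega))
  -- basic bounds on n
  have hn0 : n ≠ 0 := by
    rintro rfl; simp at hlen
  have hlog : Nat.log 10 n = k + d + 5 := by
    have := Nat.digits_len 10 n (by norm_num) hn0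
    omega
  have hnlow : 100 * P3 ≤ n := by
    rw [← hP5, ← hlog]; exact Nat.pow_log_le_self 10 hn0
  have hnhigh : n < 1000 * P3 := by
    rw [← hP6, show k + d + 6 = (k + d + 5) + 1 from rfl, ← hlog]
    exact Nat.lt_pow_succ_log_self (by norm_num) n
  have h5n : 500 * P3 ≤ n := by
    have := (Nat.le_div_iff_mul_le (show 0 < 10 ^ (k+d+5) from pow_pos (by norm_num) _)).1 hlead
    rw [hP5] at this; omega
  -- leading two digits
  set A0 : ℕ := n / (10 * P3) with hA0
  have hA0low : 50 ≤ A0 := by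
    rw [hA0, Nat.le_div_iff_mul_le (by omega)]; omega
  have hA0high : A0 ≤ 99 := by
    rw [hA0]; apply Nat.lt_succ_iff.1; rw [Nat.div_lt_iff_lt_mul (by omega)]; omega
  set A : ℕ := A0 - 9 with hA
  have hA41 : 41 ≤ A := by omega
  have hA90 : A ≤ 90 := by omega
  have hA9 : A + 9 = A0 := by omega
  have hAn : (10 * P3) * A + 9 * (10 * P3) ≤ n := by
    calc (10 * P3) * A + 9 * (10 * P3) = (A + 9) * (10 * P3) := by ring
    _ = A0 * (10 * P3) := by rw [hA9]
    _ ≤ n := Nat.div_mul_le_self n _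
  set R : ℕ := n - (10 * P3) * A with hR
  have hR1 : 90 * P3 ≤ R := by
    rw [hR]; omega
  have hR2 : R < 100 * P3 := by
    have h1 : (10 * P3) * A0 + n % (10 * P3) = n := by
      rw [hA0]; exact Nat.div_add_mod n (10 * P3)
    have h2 := Nat.mod_lt n (show 0 < 10 * P3 by omega)
    have h3 : n < (10 * P3) * A + 100 * P3 := by
      calc n < (10 * P3) * A0 + (10 * P3) := by omega
      _ = (A + 10) * (10 * P3) := by rw [show A + 10 = A0 + 1 from by omega]; ring
      _ = (10 * P3) * A + 100 * P3 := by ring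
    rw [hR]; omega
  set c : ℕ := R / P3 with hc
  have hc90 : 90 ≤ c := by rw [hc, Nat.le_div_iff_mul_le hP3pos]; omega
  have hc99 : c ≤ 99 := by
    rw [hc]; apply Nat.lt_succ_iff.1; rw [Nat.div_lt_iff_lt_mul hP3pos]; omega
  have hcR : P3 * c ≤ R := by rw [hc, mul_comm]; exact Nat.div_mul_le_self R _
  have hRc : R < P3 * c + P3 := by
    have h1 : P3 * c + R % P3 = R := by rw [hc]; exact Nat.div_add_mod R P3
    have h2 := Nat.mod_lt R hP3pos
    omega
  -- n'
  obtain ⟨n', hn'⟩ := hdvd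
  set t : ℕ := (n' + 1000 - (A + c - 65)) % 10 with ht
  have ht9 : t ≤ 9 := by omega
  set B : ℕ := c - 65 + t with hB
  have hB25 : 25 ≤ B := by omega
  have hB43 : B ≤ 43 := by omega
  have hBc : B + 56 ≤ c := by omega
  have hmod : (A + B) % 10 = n' % 10 := by omega
  -- bounds on remainder after subtracting B * P3
  have hBR : P3 * B + 56 * P3 ≤ R := by
    calc P3 * B + 56 * P3 = P3 * (B + 56) := by ring
    _ ≤ P3 * c := Nat.mul_le_mul_left _ hBc
    _ ≤ R := hcR
  have hRB2 : R < P3 * B + 66 * P3 := by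
    calc R < P3 * c + P3 := hRc
    _ = P3 * (c + 1) := by ring
    _ ≤ P3 * (B + 66) := Nat.mul_le_mul_left _ (by omega)
    _ = P3 * B + 66 * P3 := by ring
  have hsmall : 10 ^ k * (A + B) ≤ P3 := by
    calc 10 ^ k * (A + B) ≤ 10 ^ k * 1000 := Nat.mul_le_mul_left _ (by omega)
    _ = 1000 * 10 ^ k := by ring
    _ ≤ P3 := hkP3
  -- get the digit decompositions
  obtain ⟨a, ha, hsa⟩ := split18 A (by omega) (by omega)
  obtain ⟨b, hb, hsb⟩ := split18 B (by omega) (by omega)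
  refine ⟨a, b, ha, hb, ?_⟩
  have hsum : (∑ j, (10 ^ (k + d + 4) * a j + 10 ^ (k + d + 3) * b j
      + 10 ^ k * (a j + b j))) = (10 * P3) * A + P3 * B + 10 ^ k * (A + B) := by
    rw [Finset.sum_add_distrib, Finset.sum_add_distrib, ← Finset.mul_sum, ← Finset.mul_sum,
      ← Finset.mul_sum, Finset.sum_add_distrib, hsa, hsb, hP2, hP3]
  rw [hsum]
  set S : ℕ := (10 * P3) * A + P3 * B + 10 ^ k * (A + B) with hS
  have hSn : S ≤ n := by
    rw [hS]; rw [hR] at hBR; omega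
  set m : ℕ := n - S with hm
  have hm55 : 55 * P3 ≤ m := by rw [hm, hS]; rw [hR] at hBR; omega
  have hm66 : m < 66 * P3 := by rw [hm, hS]; rw [hR] at hRB2; omega
  have hm0 : m ≠ 0 := by omega
  have hmlog : Nat.log 10 m = k + d + 4 :=
    Nat.log_eq_of_pow_le_of_lt_pow (by rw [hP2]; omega) (by rw [hP5]; omega)
  refine ⟨hSn, ?_, ?_, ?_⟩
  · rw [Nat.digits_len 10 m (by norm_num) hm0, hmlog]
  · rw [Nat.le_div_iff_mul_le (show 0 < 10 ^ (k+d+4) from pow_pos (by norm_num) _), hP2]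
    omega
  · -- divisibility
    have hT : S = 10 ^ k * (10 ^ (d + 4) * A + 10 ^ (d + 3) * B + (A + B)) := by
      rw [hS, hP3, show k + d + 3 = k + (d + 3) from by omega, pow_add,
        show (10:ℕ) ^ (d + 4) = 10 * 10 ^ (d + 3) from by rw [pow_succ]; ring]
      ring
    set T : ℕ := 10 ^ (d + 4) * A + 10 ^ (d + 3) * B + (A + B) with hTdef
    have hTn' : T ≤ n' := by
      have : 10 ^ k * T ≤ 10 ^ k * n' := by rw [← hT, ← hn']; exact hSn
      exact Nat.le_of_mul_le_mul_left this (pow_pos (by norm_num) k)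
    have hTmod : T % 10 = (A + B) % 10 := by
      obtain ⟨p, hp⟩ : (10:ℕ) ∣ 10 ^ (d + 4) * A :=
        Dvd.dvd.mul_right (dvd_pow_self 10 (by omega)) A
      obtain ⟨q, hq⟩ : (10:ℕ) ∣ 10 ^ (d + 3) * B :=
        Dvd.dvd.mul_right (dvd_pow_self 10 (by omega)) B
      rw [hTdef]; omega
    obtain ⟨w, hw⟩ : (10:ℕ) ∣ n' - T := by omega
    refine ⟨w, ?_⟩
    rw [hm, hn', hT, ← Nat.mul_sub, hw, pow_succ]
    ring
end
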